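/- arXiv:2111.11978 — 12 statements merged into one kernel-verified Lean document; each statement's English description precedes it below -/
import Mathlib

section
/- Let R ⊆ S be an extension of commutative rings. Then R ⊆ S is Prüfer if and only if for each s ∈ S one has R[s] = (R :_R s)·R[s], where R[s] is the subring of S generated by R and s. -/
universe u v

/-- A ring homomorphism is a *flat epimorphism* if it makes the target a flat module over
the source and it is an epimorphism in the category of commutative rings. -/
def RingHom.IsFlatEpi {A : Type u} {B : Type v} [CommRing A] [CommRing B] (f : A →+* B) : Prop :=
  (letI := f.toAlgebra; Module.Flat A B) ∧
    ∀ ⦃C : Type (max u v)⦄ [CommRing C], ∀ g h : B →+* C, g.comp f = h.comp f → g = h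

/-- A ring homomorphism `f : A →+* B` is *Prüfer* if for every subring `T` of `B` containing
the image of `f`, the induced map `A →+* T` is a flat epimorphism.  For an extension of rings
`R ⊆ S` (i.e. `R : Subring S`), the extension is Prüfer precisely when `R.subtype.IsPrufer`. -/
def RingHom.IsPrufer {A : Type u} {B : Type v} [CommRing A] [CommRing B] (f : A →+* B) : Prop :=
  ∀ (T : Subring B) (hT : f.range ≤ T),
    (f.codRestrict T fun a => hT (f.mem_range_self a)).IsFlatEpi

/-- The conductor ideal `(R :_R s) = {r ∈ R | r · s ∈ R}` of an element `s ∈ S`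
with respect to a subring `R` of `S`. -/
def Subring.condIdeal {S : Type*} [CommRing S] (R : Subring S) (s : S) : Ideal R where
  carrier := {r : R | (r : S) * s ∈ R}
  add_mem' := by
    intro a b ha hb
    have := R.add_mem ha hb
    simpa [add_mul] using this
  zero_mem' := by simpa using R.zero_mem
  smul_mem' := by
    intro c x hx
    have := R.mul_mem c.2 hx
    simpa [mul_assoc] using this

/-- A *strong divisor* of a (local) commutative ring `R` is a regular element `t`
such that the principal ideal `Rt` is comparable to every ideal of `R`. -/
def IsStrongDivisor {R : Type*} [CommRing R] (t : R) : Prop :=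
  t ∈ nonZeroDivisors R ∧ ∀ I : Ideal R, I ≤ Ideal.span {t} ∨ Ideal.span {t} ≤ I

/-!
For an extension `A ⊆ B` and `b ∈ B`, the conductor `(A :_A b)` is the kernel of
`A → B/A, a ↦ a • b`. If `A → B` is an epimorphism then `B ⊗_A (B/A) = 0`, and if `B` is
moreover flat this module contains `B ⊗_A A/(A :_A b) = B/(A :_A b)B`, so the conductor
generates `B`. Conversely, if every conductor generates `B`, then for each prime `Q` of `B`
every `b` is multiplied into `A` by an element of `A` outside `Q`; this makes `B_Q` the
localization of `A` at `Q ∩ A`, so `B` is flat over `A`, and since the conductor of `b` kills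
`1 ⊗ b - b ⊗ 1`, `A → B` is an epimorphism. The condition for `R[s]` passes to every
intermediate ring `T ∋ s`.
-/

theorem RingHom.isFlatEpi_algebraMap_iff {A B : Type u} [CommRing A] [CommRing B] [Algebra A B] :
    (algebraMap A B).IsFlatEpi ↔ Module.Flat A B ∧ Algebra.IsEpi A B := by
  rw [RingHom.IsFlatEpi, toAlgebra_algebraMap, ← CommRingCat.epi_iff_epi]
  refine and_congr_right fun _ => ⟨fun H => ⟨fun g h e => ?_⟩, fun H C _ g h e => ?_⟩
  · exact CommRingCat.hom_ext (H g.hom h.hom congr(($e).hom))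
  · have := (CategoryTheory.cancel_epi (CommRingCat.ofHom (algebraMap A B))
      (g := CommRingCat.ofHom (S := C) g) (h := CommRingCat.ofHom h)).mp
      (CommRingCat.hom_ext e)
    exact congr(($this).hom)

theorem Ideal.exists_mem_apply_notMem_of_map_eq_top {R S : Type*} [Semiring R] [Semiring S]
    {f : R →+* S} {I : Ideal R} (hI : I.map f = ⊤) {Q : Ideal S} (hQ : Q ≠ ⊤) :
    ∃ a ∈ I, f a ∉ Q := by
  by_contra! H
  exact hQ (top_le_iff.mp (hI ▸ Ideal.map_le_iff_le_comap.mpr H))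

section Conductor

open TensorProduct

variable {A B : Type*} [CommRing A] [CommRing B] [Algebra A B]

theorem Algebra.IsEpi.subsingleton_tensor_quotient_one [Algebra.IsEpi A B] :
    Subsingleton (B ⊗[A] (B ⧸ (1 : Submodule A B))) := by
  refine subsingleton_of_forall_eq 0 fun x => ?_
  induction x with
  | zero => rfl
  | add x y hx hy => rw [hx, hy, add_zero]
  | tmul b c =>
    obtain ⟨c, rfl⟩ := Submodule.mkQ_surjective _ c
    have hbc : b ⊗ₜ[A] c = (b * c) ⊗ₜ[A] (1 : B) := by
      rw [← mul_one b, ← one_mul c, ← Algebra.TensorProduct.tmul_mul_tmul,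
        (Algebra.isEpi_iff_forall_one_tmul_eq A B).mp ‹_› c,
        Algebra.TensorProduct.tmul_mul_tmul]
      simp
    have h1 : (1 : Submodule A B).mkQ 1 = 0 :=
      (Submodule.Quotient.mk_eq_zero _).mpr (Submodule.one_le.mp le_rfl)
    rw [← LinearMap.lTensor_tmul, hbc, LinearMap.lTensor_tmul, h1, tmul_zero]

theorem Algebra.IsEpi.map_colon_eq_top [Module.Flat A B] [Algebra.IsEpi A B] (b : B) :
    ((1 : Submodule A B).colon {b}).map (algebraMap A B) = ⊤ := by
  set I := (1 : Submodule A B).colon {b}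
  let φ : A →ₗ[A] B ⧸ (1 : Submodule A B) :=
    (1 : Submodule A B).mkQ ∘ₗ LinearMap.toSpanSingleton A B b
  have hker : I = LinearMap.ker φ := by
    ext a
    rw [LinearMap.mem_ker, LinearMap.comp_apply, LinearMap.toSpanSingleton_apply,
      Submodule.mkQ_apply, Submodule.Quotient.mk_eq_zero, Submodule.mem_colon_singleton]
  have hinj : Function.Injective ((I.liftQ φ hker.le).lTensor B) :=
    Module.Flat.lTensor_preserves_injective_linearMap _
      (LinearMap.ker_eq_bot.mp (Submodule.ker_liftQ_eq_bot' _ _ hker))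
  have := Algebra.IsEpi.subsingleton_tensor_quotient_one (A := A) (B := B)
  have : Subsingleton (B ⊗[A] (A ⧸ I)) := hinj.subsingleton
  rw [← Ideal.Quotient.subsingleton_iff]
  exact (Algebra.TensorProduct.quotIdealMapEquivTensorQuot B I).toEquiv.subsingleton

theorem Algebra.isEpi_of_map_colon_eq_top
    (h : ∀ b : B, ((1 : Submodule A B).colon {b}).map (algebraMap A B) = ⊤) :
    Algebra.IsEpi A B := by
  refine (Algebra.isEpi_iff_forall_one_tmul_eq A B).mpr fun b => ?_
  set I := (1 : Submodule A B).colon {b}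
  let x : B ⊗[A] B := 1 ⊗ₜ b - b ⊗ₜ 1
  have hIx : I ≤ (Submodule.span _ {x}).annihilator.comap (algebraMap A (B ⊗[A] B)) := by
    intro a ha
    obtain ⟨c, hc⟩ := Submodule.mem_one.mp (Submodule.mem_colon_singleton.mp ha)
    rw [Ideal.mem_comap, Submodule.mem_annihilator_span_singleton, algebraMap_smul,
      smul_sub, ← TensorProduct.tmul_smul, TensorProduct.smul_tmul', ← hc,
      Algebra.TensorProduct.tmul_one_eq_one_tmul, sub_self]
  have hItop : I.map (algebraMap A (B ⊗[A] B)) = ⊤ := by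
    rw [IsScalarTower.algebraMap_eq A B (B ⊗[A] B), ← Ideal.map_map, h b, Ideal.map_top]
  have := Ideal.map_le_iff_le_comap.mpr hIx
  rw [hItop, top_le_iff, Submodule.annihilator_eq_top_iff, Submodule.span_singleton_eq_bot] at this
  exact sub_eq_zero.mp this

theorem isLocalization_atPrime_of_map_colon_eq_top (hinj : Function.Injective (algebraMap A B))
    (h : ∀ b : B, ((1 : Submodule A B).colon {b}).map (algebraMap A B) = ⊤)
    (Q : Ideal B) [Q.IsPrime] :
    IsLocalization (Q.comap (algebraMap A B)).primeCompl (Localization.AtPrime Q) := by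
  have clear_denom (b : B) :
      ∃ a c : A, algebraMap A B a ∉ Q ∧ algebraMap A B a * b = algebraMap A B c := by
    obtain ⟨a, ha, haQ⟩ := Ideal.exists_mem_apply_notMem_of_map_eq_top (h b)
      (Ideal.IsPrime.ne_top ‹_›)
    obtain ⟨c, hc⟩ := Submodule.mem_one.mp (Submodule.mem_colon_singleton.mp ha)
    exact ⟨a, c, haQ, by rw [hc, Algebra.smul_def]⟩
  have halg := IsScalarTower.algebraMap_apply A B (Localization.AtPrime Q)
  refine (isLocalization_iff _ _).mpr ⟨fun a => ?_, fun w => ?_, fun {a₁ a₂} e => ?_⟩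
  · rw [halg]
    exact IsLocalization.map_units _ (⟨_, a.2⟩ : Q.primeCompl)
  · obtain ⟨⟨t, v⟩, hv⟩ := IsLocalization.surj Q.primeCompl w
    obtain ⟨a, c, ha, hc⟩ := clear_denom t
    obtain ⟨d, e, hd, he⟩ := clear_denom v
    have hae : algebraMap A B (a * e) ∈ Q.primeCompl := by
      rw [map_mul, ← he]
      exact Q.primeCompl.mul_mem ha (Q.primeCompl.mul_mem hd v.2)
    -- `w = t / v = (d * c) / (a * e)`
    refine ⟨⟨d * c, a * e, hae⟩, ?_⟩
    simp only [halg, map_mul, ← he, ← hc]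
    linear_combination
      (algebraMap B _ (algebraMap A B a) * algebraMap B _ (algebraMap A B d)) * hv
  · rw [halg, halg] at e
    obtain ⟨w, hw⟩ := IsLocalization.exists_of_eq (M := Q.primeCompl) e
    obtain ⟨d, m, hd, hm⟩ := clear_denom w
    have hmQ : algebraMap A B m ∈ Q.primeCompl := hm ▸ Q.primeCompl.mul_mem hd w.2
    refine ⟨⟨m, hmQ⟩, hinj ?_⟩
    simp only [map_mul, ← hm, mul_assoc, hw]

theorem Module.flat_of_map_colon_eq_top (hinj : Function.Injective (algebraMap A B))
    (h : ∀ b : B, ((1 : Submodule A B).colon {b}).map (algebraMap A B) = ⊤) :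
    Module.Flat A B := by
  refine Module.flat_of_isLocalized_maximal B B (fun Q => Localization.AtPrime Q)
    (fun Q => Algebra.linearMap B _) fun Q _ => ?_
  have := isLocalization_atPrime_of_map_colon_eq_top hinj h Q
  exact IsLocalization.flat _ (Q.comap (algebraMap A B)).primeCompl

end Conductor

namespace Subring

variable {S : Type*} [CommRing S] {R T : Subring S}

theorem colon_one_eq_condIdeal (hRT : R ≤ T) (t : T) :
    letI := (inclusion hRT).toAlgebra
    (1 : Submodule R T).colon {t} = R.condIdeal t := by
  let := (inclusion hRT).toAlgebra
  ext a
  rw [Submodule.mem_colon_singleton, Submodule.mem_one]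
  refine ⟨fun ⟨c, hc⟩ => ?_, fun ha => ⟨⟨_, ha⟩, rfl⟩⟩
  have hc : (c : S) = a * t := congrArg Subtype.val hc
  change (a : S) * t ∈ R
  exact hc ▸ c.2

theorem inclusion_comp_inclusion {U : Subring S} (hRT : R ≤ T) (hTU : T ≤ U) :
    (inclusion hTU).comp (inclusion hRT) = inclusion (hRT.trans hTU) :=
  rfl

theorem subtype_isPrufer_iff :
    R.subtype.IsPrufer ↔ ∀ (T : Subring S) (hRT : R ≤ T), (inclusion hRT).IsFlatEpi := by
  simp only [RingHom.IsPrufer, range_subtype]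
  rfl

theorem inclusion_isFlatEpi_iff (hRT : R ≤ T) :
    (inclusion hRT).IsFlatEpi ↔ ∀ t : T, (R.condIdeal t).map (inclusion hRT) = ⊤ := by
  let := (inclusion hRT).toAlgebra
  change (algebraMap R T).IsFlatEpi ↔ _
  simp_rw [RingHom.isFlatEpi_algebraMap_iff, ← colon_one_eq_condIdeal hRT]
  refine ⟨fun ⟨_, _⟩ => Algebra.IsEpi.map_colon_eq_top, fun h => ⟨?_, ?_⟩⟩
  · exact Module.flat_of_map_colon_eq_top (inclusion_injective hRT) h
  · exact Algebra.isEpi_of_map_colon_eq_top h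

end Subring

/-- `R ⊆ S` is Prüfer iff for each `s ∈ S` one has
`R[s] = (R :_R s)·R[s]`, where `R[s]` is the subring of `S` generated by `R` and `s`. -/
theorem isPrufer_iff_condIdeal_adjoin {S : Type*} [CommRing S] (R : Subring S) :
    R.subtype.IsPrufer ↔
      ∀ s : S,
        Ideal.map
          (Subring.inclusion
            (show R ≤ Subring.closure ((R : Set S) ∪ {s}) from
              fun x hx => Subring.subset_closure (Set.mem_union_left _ hx)))
          (R.condIdeal s) = ⊤ := by
  simp_rw [Subring.subtype_isPrufer_iff, Subring.inclusion_isFlatEpi_iff]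
  refine ⟨fun h s => ?_, fun h T hRT t => ?_⟩
  · exact h (Subring.closure ((R : Set S) ∪ {s})) _
      ⟨s, Subring.subset_closure (Set.mem_union_right _ rfl)⟩
  · have hle : Subring.closure ((R : Set S) ∪ {(t : S)}) ≤ T :=
      Subring.closure_le.mpr (Set.union_subset hRT (Set.singleton_subset_iff.mpr t.2))
    simpa only [Ideal.map_map, Ideal.map_top, Subring.inclusion_comp_inclusion] using
      congrArg (Ideal.map (Subring.inclusion hle)) (h t)
end

section
/- Let R ⊆ S be an extension of commutative rings and let r₁, …, rₙ ∈ R be elements generating the unit ideal of R (so that Spec(R) = D(r₁) ∪ ⋯ ∪ D(rₙ)). If for each i = 1, …, n the induced extension R_{rᵢ} ⊆ S_{rᵢ} of localizations away from rᵢ is Prüfer, then R ⊆ S is Prüfer. -/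
universe u v

/-! Let `T` be an intermediate ring of `R ⊆ S`. Inverting `rᵢ` embeds `T_{rᵢ}` into `S_{rᵢ}` as an
intermediate ring of `R_{rᵢ} ⊆ S_{rᵢ}`, so each `R_{rᵢ} → T_{rᵢ}` is a flat epimorphism. Both
properties descend along a cover `D(rᵢ)` of `Spec R`: flatness is local, and two maps `T → C`
that agree on `R` agree after inverting each `rᵢ`, so their difference is killed by a power of
every `rᵢ`, hence is zero since the `rᵢ` generate the unit ideal. -/

namespace Localization

variable {A B C : Type*} [CommRing A] [CommRing B] [CommRing C]

theorem awayMap_injective_of_injective {f : A →+* B} (hf : Function.Injective f) (r : A) :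
    Function.Injective (awayMap f r) :=
  awayMap_injective_iff.mpr fun a ha => ⟨0, by simpa using hf (ha.trans (map_zero f).symm)⟩

theorem awayMap_comp_awayMap (f : A →+* B) (g : B →+* C) (r : A) :
    (awayMap g (f r)).comp (awayMap f r) = awayMap (g.comp f) r :=
  IsLocalization.map_comp_map _ _

end Localization

namespace RingHom

variable {A : Type u} {B : Type v} [CommRing A] [CommRing B]

def IsEpi (f : A →+* B) : Prop :=
  ∀ ⦃C : Type (max u v)⦄ [CommRing C], ∀ g h : B →+* C, g.comp f = h.comp f → g = h

theorem isFlatEpi_iff (f : A →+* B) : f.IsFlatEpi ↔ f.Flat ∧ f.IsEpi := Iff.rfl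

theorem IsEpi.exists_pow_mul_eq_of_awayMap {f : A →+* B} {r : A}
    (hr : (Localization.awayMap f r).IsEpi) {C : Type (max u v)} [CommRing C]
    {g h : B →+* C} (hgh : g.comp f = h.comp f) (b : B) :
    ∃ n : ℕ, g (f r) ^ n * g b = g (f r) ^ n * h b := by
  set c := g (f r)
  -- `g` and `h` extend to `B_{f r} → C_c`, and these extensions agree on `A_r`.
  let ι := algebraMap C (Localization.Away c)
  have hg : IsUnit ((ι.comp g) (f r)) := IsLocalization.Away.algebraMap_isUnit c
  have hh : IsUnit ((ι.comp h) (f r)) := by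
    rwa [comp_apply, ← comp_apply h f, ← hgh]
  have hlift : Localization.awayLift (ι.comp g) (f r) hg =
      Localization.awayLift (ι.comp h) (f r) hh := by
    refine hr _ _ (IsLocalization.ringHom_ext (Submonoid.powers r) (RingHom.ext fun a => ?_))
    simp only [Localization.awayMap, Localization.awayLift, IsLocalization.Away.map, comp_apply,
      IsLocalization.map_eq, IsLocalization.Away.lift_eq, ← comp_apply g f, hgh]
  have := congr($hlift (algebraMap B _ b))
  simp only [Localization.awayLift, IsLocalization.Away.lift_eq, comp_apply] at this
  obtain ⟨⟨_, n, rfl⟩, hn⟩ := (IsLocalization.eq_iff_exists (Submonoid.powers c) _).mp this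
  exact ⟨n, hn⟩

theorem IsEpi.of_localization_span (f : A →+* B) (s : Set A) (hs : Ideal.span s = ⊤)
    (H : ∀ r : s, (Localization.awayMap f r).IsEpi) : f.IsEpi := by
  intro C _ g h hgh
  ext b
  let := (g.comp f).toAlgebra
  have : g b - h b ∈ (⊥ : Submodule A C) :=
    Submodule.mem_of_span_eq_top_of_smul_pow_mem _ s hs _ fun r => by
      obtain ⟨n, hn⟩ := (H r).exists_pow_mul_eq_of_awayMap hgh b
      exact ⟨n, by simp [Algebra.smul_def, algebraMap_toAlgebra, mul_sub, hn]⟩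
  simpa [sub_eq_zero] using this

theorem IsFlatEpi.of_localization_span {A B : Type u} [CommRing A] [CommRing B] (f : A →+* B)
    (s : Set A) (hs : Ideal.span s = ⊤) (H : ∀ r : s, (Localization.awayMap f r).IsFlatEpi) :
    f.IsFlatEpi :=
  ⟨Flat.propertyIsLocal.ofLocalizationSpan f s hs fun r => (H r).1,
    IsEpi.of_localization_span f s hs fun r => (H r).2⟩

theorem IsFlatEpi.of_ringEquiv_comp {B' : Type v} [CommRing B'] {f : A →+* B} (e : B ≃+* B')
    (hf : ((e : B →+* B').comp f).IsFlatEpi) : f.IsFlatEpi := by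
  rw [isFlatEpi_iff] at hf ⊢
  refine ⟨?_, fun C _ g h hgh => ?_⟩
  · have he : (e.symm : B' →+* B).Flat := .of_bijective e.symm.bijective
    simpa [← comp_assoc] using hf.1.comp he
  · have := hf.2 (g.comp e.symm) (h.comp e.symm) (by ext a; simpa using congr($hgh a))
    ext b
    simpa using congr($this (e b))

theorem IsPrufer.isFlatEpi_of_comp_eq {B' : Type v} [CommRing B'] {F : A →+* B'}
    (hF : F.IsPrufer) {G : B →+* B'} {H : A →+* B} (hG : Function.Injective G)
    (hGH : G.comp H = F) : H.IsFlatEpi := by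
  subst hGH
  classical
  -- `G` identifies `B` with the intermediate ring `G.range` of `F`.
  exact .of_ringEquiv_comp (RingEquiv.ofLeftInverse (Function.leftInverse_invFun hG))
    (hF G.range (by rintro _ ⟨a, rfl⟩; exact ⟨H a, rfl⟩))

end RingHom

/-- If `r₁, …, rₙ ∈ R` generate the unit ideal of `R` and each induced
extension of localizations `R_{rᵢ} ⊆ S_{rᵢ}` is Prüfer, then `R ⊆ S` is Prüfer. -/
theorem isPrufer_of_localization_cover {S : Type*} [CommRing S] (R : Subring S)
    (n : ℕ) (r : Fin n → R) (hspan : Ideal.span (Set.range r) = ⊤)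
    (hloc : ∀ i : Fin n, (Localization.awayMap R.subtype (r i)).IsPrufer) :
    R.subtype.IsPrufer := by
  intro T hRT
  set ι := R.subtype.codRestrict T fun a => hRT (R.subtype.mem_range_self a)
  refine .of_localization_span ι (Set.range r) hspan ?_
  rintro ⟨_, i, rfl⟩
  exact (hloc i).isFlatEpi_of_comp_eq
    (Localization.awayMap_injective_of_injective T.subtype_injective (ι (r i)))
    (Localization.awayMap_comp_awayMap ι T.subtype (r i))
end

section
/- Let R ⊆ S be an extension of commutative rings such that the complement S \ R is closed under multiplication. Then R is integrally closed in S. -/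
/-!
Let `s ∉ R` and let `p = X * q + c` be monic over `R` with `p(s) ∈ R` (e.g. `p(s) = 0`). Then
`s * q(s) = p(s) - c ∈ R`, and since `S \ R` is closed under multiplication this forces
`q(s) ∈ R`. Descending along `q = divX p` (Horner's scheme) the degree drops to zero, so some
`q = 1` occurs, and then `s = s * q(s) ∈ R`, a contradiction.
-/

open Polynomial

theorem Polynomial.Monic.divX {A : Type*} [Semiring A] {p : A[X]} (hp : p.Monic)
    (h : p.natDegree ≠ 0) : p.divX.Monic := by
  unfold Monic Polynomial.leadingCoeff
  rw [natDegree_divX_eq_natDegree_tsub_one, coeff_divX, Nat.sub_add_cancel (by omega)]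
  exact hp

theorem Polynomial.Monic.eq_one_of_aeval_mem {S : Type*} [CommRing S] {R : Subring S}
    (hmul : ∀ x y : S, x ∉ R → y ∉ R → x * y ∉ R) {s : S} (hs : s ∉ R) {p : R[X]}
    (hp : p.Monic) (hps : aeval s p ∈ R) : p = 1 := by
  induction h : p.natDegree generalizing p with
  | zero => exact hp.natDegree_eq_zero.mp h
  | succ n ih =>
    have hsq : s * aeval s p.divX ∈ R := by
      have hsplit := congrArg (aeval s) (X_mul_divX_add p)
      rw [map_add, map_mul, aeval_X, aeval_C] at hsplit
      rw [eq_sub_of_add_eq hsplit]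
      exact R.sub_mem hps (p.coeff 0).2
    have hq : aeval s p.divX ∈ R := by_contra fun hq => hmul _ _ hs hq hsq
    have hq_one : p.divX = 1 :=
      ih (hp.divX (by omega)) hq (by rw [natDegree_divX_eq_natDegree_tsub_one, h]; rfl)
    rw [hq_one, map_one, mul_one] at hsq
    exact absurd hsq hs

/-- If `R ⊆ S` is an extension of commutative rings such that `S \ R` is
closed under multiplication, then `R` is integrally closed in `S`. -/
theorem integrallyClosed_of_compl_mul_closed {S : Type*} [CommRing S] (R : Subring S)
    (hmul : ∀ x y : S, x ∉ R → y ∉ R → x * y ∉ R) :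
    ∀ s : S, IsIntegral R s → s ∈ R := by
  rintro s ⟨p, hp, hps⟩
  by_contra hs
  have hp_one : p = 1 :=
    hp.eq_one_of_aeval_mem hmul hs (by rw [aeval_def, hps]; exact R.zero_mem)
  have h10 : (1 : S) = 0 := by rwa [hp_one, eval₂_one] at hps
  exact hs (by rw [← mul_one s, h10, mul_zero]; exact R.zero_mem)
end

section
/- Let S be a commutative ring, let n > 1, and let R, B₁, …, Bₙ be subrings of S such that all the Bᵢ, except possibly two of them, are integrally closed in S. If R ⊆ B₁ ∪ ⋯ ∪ Bₙ, then R ⊆ Bᵢ for some i. -/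
/-!
Pass to an irredundant subcover and pick two indices `i ≠ j` outside of which every member is
integrally closed. For `x ∈ R` lying in none of the integrally closed members, the elements
`x ^ m + y` (`m ≥ 1`, `y ∈ R`) cannot all avoid `Bᵢ ∪ Bⱼ`: otherwise two of them, `x ^ m + y` and
`x ^ m' + y` with `m < m'`, lie in a common integrally closed `Bₖ`, and `x` is a root of the monic
polynomial `X ^ m' - X ^ m - (x ^ m' - x ^ m)` over `Bₖ`, so `x ∈ Bₖ`. Applied to an element `a`
exclusive to `Bᵢ` and one `b` exclusive to `Bⱼ`, this yields a power `aᵐ ∈ Bᵢ ∩ Bⱼ`; applied again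
to `aᵐ` and `a + b` it forces `a + b ∈ Bᵢ ∪ Bⱼ`, which exclusivity rules out.
-/

open Polynomial

theorem Finset.exists_ne_forall_ne_ne {ι : Type*} [DecidableEq ι] {T : Finset ι}
    (hT : 1 < T.card) (i₀ j₀ : ι) :
    ∃ i ∈ T, ∃ j ∈ T, i ≠ j ∧ ∀ k ∈ T, k ≠ i → k ≠ j → k ≠ i₀ ∧ k ≠ j₀ := by
  obtain ⟨u, hsu, huT, hu⟩ := exists_subsuperset_card_eq (s := T ∩ {i₀, j₀}) inter_subset_left
    ((card_le_card inter_subset_right).trans card_le_two) hT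
  obtain ⟨i, j, hij, rfl⟩ := card_eq_two.mp hu
  refine ⟨i, huT (by simp), j, huT (by simp), hij, fun k hk hki hkj => ?_⟩
  have : k ∉ T ∩ {i₀, j₀} := fun h => by simpa [hki, hkj] using hsu h
  simpa [hk, not_or] using this

namespace Subring

variable {S : Type*} [CommRing S]

theorem mem_of_pow_sub_pow_mem {B : Subring S} (hB : ∀ s : S, IsIntegral B s → s ∈ B)
    {x : S} {m m' : ℕ} (hm : m < m') (h : x ^ m' - x ^ m ∈ B) : x ∈ B := by
  have hc : algebraMap B S ⟨_, h⟩ = x ^ m' - x ^ m := rfl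
  refine hB x ⟨X ^ m' - (X ^ m + C ⟨_, h⟩), monic_X_pow_sub ?_, by simp [hc]⟩
  calc degree (X ^ m + C (⟨_, h⟩ : B)) ≤ m := by
        refine (degree_add_le _ _).trans (max_le (degree_X_pow_le m) (degree_C_le.trans ?_))
        exact_mod_cast m.zero_le
    _ < m' := by exact_mod_cast hm

theorem mem_of_pow_mem {B : Subring S} (hB : ∀ s : S, IsIntegral B s → s ∈ B)
    {x : S} {m : ℕ} (hm : 0 < m) (h : x ^ m ∈ B) : x ∈ B :=
  mem_of_pow_sub_pow_mem hB hm (by simpa using sub_mem h B.one_mem)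

variable {ι : Type*} {R : Subring S} {B : ι → Subring S} {T : Finset ι} {i j : ι}

theorem exists_pow_add_mem_or_mem (hcov : (R : Set S) ⊆ ⋃ k ∈ T, (B k : Set S))
    (hcl : ∀ k ∈ T, k ≠ i → k ≠ j → ∀ s : S, IsIntegral (B k) s → s ∈ B k)
    {x y : S} (hx : x ∈ R) (hy : y ∈ R) (hxk : ∀ k ∈ T, k ≠ i → k ≠ j → x ∉ B k) :
    ∃ m, 0 < m ∧ (x ^ m + y ∈ B i ∨ x ^ m + y ∈ B j) := by
  by_contra! hc
  have hmem (m : ℕ) : ∃ k ∈ T, x ^ (m + 1) + y ∈ B k := by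
    simpa using hcov (add_mem (pow_mem hx _) hy)
  choose l hlT hl using hmem
  obtain ⟨m, m', hlt, heq⟩ := T.finite_toSet.exists_lt_map_eq_of_forall_mem hlT
  have hli : l m ≠ i := fun h => (hc (m + 1) m.succ_pos).1 (h ▸ hl m)
  have hlj : l m ≠ j := fun h => (hc (m + 1) m.succ_pos).2 (h ▸ hl m)
  refine hxk (l m) (hlT m) hli hlj
    (mem_of_pow_sub_pow_mem (hcl _ (hlT m) hli hlj) (Nat.add_lt_add_right hlt 1) ?_)
  have hm' : x ^ (m' + 1) + y ∈ B (l m) := heq ▸ hl m'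
  simpa only [add_sub_add_right_eq_sub] using sub_mem hm' (hl m)

theorem mem_or_mem_of_mem_of_mem (hcov : (R : Set S) ⊆ ⋃ k ∈ T, (B k : Set S))
    (hcl : ∀ k ∈ T, k ≠ i → k ≠ j → ∀ s : S, IsIntegral (B k) s → s ∈ B k)
    {x y : S} (hx : x ∈ R) (hy : y ∈ R) (hxk : ∀ k ∈ T, k ≠ i → k ≠ j → x ∉ B k)
    (hxi : x ∈ B i) (hxj : x ∈ B j) : y ∈ B i ∨ y ∈ B j := by
  obtain ⟨m, -, h⟩ := exists_pow_add_mem_or_mem hcov hcl hx hy hxk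
  exact h.imp (fun h => by simpa using sub_mem h (pow_mem hxi m))
    (fun h => by simpa using sub_mem h (pow_mem hxj m))

theorem false_of_exclusive_mem (hcov : (R : Set S) ⊆ ⋃ k ∈ T, (B k : Set S))
    (hcl : ∀ k ∈ T, k ≠ i → k ≠ j → ∀ s : S, IsIntegral (B k) s → s ∈ B k)
    (hi : i ∈ T) (hj : j ∈ T) (hij : i ≠ j) {a b : S}
    (ha : a ∈ R) (hai : a ∈ B i) (ha' : ∀ k ∈ T, k ≠ i → a ∉ B k)
    (hb : b ∈ R) (hbj : b ∈ B j) (hb' : ∀ k ∈ T, k ≠ j → b ∉ B k) : False := by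
  have hak : ∀ k ∈ T, k ≠ i → k ≠ j → a ∉ B k := fun k hk hki _ => ha' k hk hki
  obtain ⟨m, hm, h⟩ := exists_pow_add_mem_or_mem hcov hcl ha hb hak
  have hpj : a ^ m ∈ B j := by
    have h := h.resolve_left fun h => hb' i hi hij (by simpa using sub_mem h (pow_mem hai m))
    simpa using sub_mem h hbj
  have hpk : ∀ k ∈ T, k ≠ i → k ≠ j → a ^ m ∉ B k := fun k hk hki hkj h =>
    hak k hk hki hkj (mem_of_pow_mem (hcl k hk hki hkj) hm h)
  rcases mem_or_mem_of_mem_of_mem hcov hcl (pow_mem ha m) (add_mem ha hb) hpk (pow_mem hai m) hpj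
    with h | h
  · exact hb' i hi hij (by simpa using sub_mem h hai)
  · exact ha' j hj hij.symm (by simpa using sub_mem h hbj)

theorem exists_mem_forall_not_mem_of_not_subset_biUnion_erase [DecidableEq ι] {l : ι}
    (hcov : (R : Set S) ⊆ ⋃ k ∈ T, (B k : Set S))
    (h : ¬ (R : Set S) ⊆ ⋃ k ∈ T.erase l, (B k : Set S)) :
    ∃ a ∈ R, a ∈ B l ∧ ∀ k ∈ T, k ≠ l → a ∉ B k := by
  obtain ⟨a, ha, ha'⟩ := Set.not_subset.mp h
  simp only [Set.mem_iUnion, Finset.mem_erase, not_exists] at ha'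
  obtain ⟨k, hk, hak⟩ : ∃ k ∈ T, a ∈ B k := by simpa using hcov ha
  obtain rfl : k = l := by_contra fun hkl => ha' k ⟨hkl, hk⟩ hak
  exact ⟨a, ha, hak, fun k' hk' hk'k => ha' k' ⟨hk'k, hk'⟩⟩

theorem exists_le_of_subset_biUnion [DecidableEq ι] {i₀ j₀ : ι}
    (hcl : ∀ k, k ≠ i₀ → k ≠ j₀ → ∀ s : S, IsIntegral (B k) s → s ∈ B k)
    (hcov : (R : Set S) ⊆ ⋃ k ∈ T, (B k : Set S)) : ∃ i ∈ T, R ≤ B i := by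
  induction T using Finset.strongInduction with
  | H T ih =>
  by_contra! hR
  have hexcl : ∀ l ∈ T, ∃ a ∈ R, a ∈ B l ∧ ∀ k ∈ T, k ≠ l → a ∉ B k := by
    refine fun l hl => exists_mem_forall_not_mem_of_not_subset_biUnion_erase hcov fun h => ?_
    obtain ⟨k, hk, hRk⟩ := ih _ (Finset.erase_ssubset hl) h
    exact hR k (Finset.mem_of_mem_erase hk) hRk
  have hT : 1 < T.card := by
    obtain ⟨l, hl, -⟩ : ∃ l ∈ T, (0 : S) ∈ B l := by simpa using hcov R.zero_mem
    obtain ⟨r, hr, hrl⟩ := Set.not_subset.mp (hR l hl)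
    obtain ⟨k, hk, hrk⟩ : ∃ k ∈ T, r ∈ B k := by simpa using hcov hr
    exact Finset.one_lt_card.mpr ⟨k, hk, l, hl, fun h => hrl (h ▸ hrk)⟩
  obtain ⟨i, hi, j, hj, hij, hij₀⟩ := Finset.exists_ne_forall_ne_ne hT i₀ j₀
  obtain ⟨a, ha, hai, ha'⟩ := hexcl i hi
  obtain ⟨b, hb, hbj, hb'⟩ := hexcl j hj
  exact false_of_exclusive_mem hcov (fun k hk hki hkj => (hij₀ k hk hki hkj).elim (hcl k))
    hi hj hij ha hai ha' hb hbj hb'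

end Subring

theorem subring_avoidance_general {S : Type*} [CommRing S] (n : ℕ)
    (R : Subring S) (B : Fin n → Subring S)
    (hic : ∃ i j : Fin n, ∀ k : Fin n, k ≠ i → k ≠ j →
      ∀ s : S, IsIntegral (B k) s → s ∈ B k)
    (hsub : (R : Set S) ⊆ ⋃ i : Fin n, (B i : Set S)) :
    ∃ i : Fin n, R ≤ B i := by
  obtain ⟨i₀, j₀, hic⟩ := hic
  obtain ⟨i, -, hi⟩ :=
    Subring.exists_le_of_subset_biUnion (T := Finset.univ) hic (by simpa using hsub)
  exact ⟨i, hi⟩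

/-- (Avoidance lemma) Let `R, B₁, …, Bₙ` (`n > 1`) be subrings of `S` such
that all the `Bᵢ`, except possibly two of them, are integrally closed in `S`.  If
`R ⊆ B₁ ∪ ⋯ ∪ Bₙ`, then `R ⊆ Bᵢ` for some `i`. -/
theorem subring_avoidance {S : Type*} [CommRing S] (n : ℕ) (hn : 1 < n)
    (R : Subring S) (B : Fin n → Subring S)
    (hic : ∃ i j : Fin n, ∀ k : Fin n, k ≠ i → k ≠ j →
      ∀ s : S, IsIntegral (B k) s → s ∈ B k)
    (hsub : (R : Set S) ⊆ ⋃ i : Fin n, (B i : Set S)) :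
    ∃ i : Fin n, R ≤ B i :=
  subring_avoidance_general n R B hic hsub
end

section
/- Let R ⊆ S be a Prüfer extension of commutative rings and let U, B₁, …, Bₙ be intermediate rings with R ⊆ U, Bᵢ ⊆ S, such that B₁ ∩ ⋯ ∩ Bₙ ⊆ U, the extension U ⊆ S is Prüfer, and the complement S \ U is closed under multiplication (i.e., U ⊆ S is Prüfer–Manis). Then Bᵢ ⊆ U for some i. -/
universe u v

/-!
For a Prüfer extension `R ⊆ S`, an intermediate ring `D` and `x ∈ S`, the conductor `(D :_D x)`
generates the unit ideal of `D[x]`, because `R → D[x]` is a flat epimorphism. Together with Nakayama's lemma this makes `D` integrally closed in `S`, and it shows that at every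
prime `q` of `D` each `t ∈ S` satisfies `f * t = g` for some `f, g ∈ D` not both in `q`.

It suffices to treat two rings `A, B` with `A ∩ B ⊆ U`. As `S \ U` is multiplicatively closed,
the sets `{z | z * a ∈ U}` are totally ordered by inclusion. If `a ∈ A \ U`, `b ∈ B \ U` and
`z * a ∈ U → z * b ∈ U`, write `w * a = 1 - u` with `u ∈ (D :_D a)`, `D = A ∩ B`, and pick a
maximal ideal `q` of `D` containing `{d | d * b ∈ U}`. For `t = w * b` and `f * t = g` we get
`g * a = f * (1 - u) * b ∈ A ∩ B ⊆ U`, which forces both `f` and `g` into `q`.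
-/

open Polynomial TensorProduct

theorem RingHom.IsFlatEpi.tmul_one_eq_one_tmul {A B : Type u} [CommRing A] [CommRing B]
    [Algebra A B] (hf : (algebraMap A B).IsFlatEpi) (b : B) : b ⊗ₜ[A] (1 : B) = 1 ⊗ₜ[A] b := by
  have hepi := hf.2 (Algebra.TensorProduct.includeLeftRingHom : B →+* B ⊗[A] B)
    (Algebra.TensorProduct.includeRight (R := A) (A := B)).toRingHom
    (RingHom.ext fun a => Algebra.TensorProduct.tmul_one_eq_one_tmul a)
  exact RingHom.congr_fun hepi b

theorem Polynomial.aeval_divX_mul_add {A B : Type*} [CommRing A] [CommRing B] [Algebra A B]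
    (p : A[X]) (x : B) : aeval x p.divX * x + algebraMap A B (p.coeff 0) = aeval x p := by
  conv_rhs => rw [← divX_mul_X_add p]
  simp

theorem Polynomial.isIntegral_coeff_zero_sub_one_smul {A B : Type*} [CommRing A] [CommRing B]
    [Algebra A B] {x y : B} {s : A} (hxy : x * y = algebraMap A B s) {p : A[X]}
    (hp : aeval x p = 1) : IsIntegral A ((p.coeff 0 - 1) • y) := by
  set N := p.natDegree
  -- `y ^ N * p(x) = y ^ N` rewritten with `x * y = s`: a relation for `y` with `y ^ N`-coefficient
  -- `p.coeff 0 - 1`.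
  set P : A[X] := ∑ k ∈ Finset.range (N + 1), monomial (N - k) (p.coeff k * s ^ k) - X ^ N
  have hP : aeval y P = 0 := by
    have hsum : ∑ k ∈ Finset.range (N + 1), algebraMap A B (p.coeff k * s ^ k) * y ^ (N - k)
        = y ^ N := calc
      _ = ∑ k ∈ Finset.range (N + 1), p.coeff k • x ^ k * y ^ N := by
        refine Finset.sum_congr rfl fun k hk => ?_
        have hkN : y ^ N = y ^ k * y ^ (N - k) := by
          rw [← pow_add, Nat.add_sub_cancel' (Nat.lt_succ_iff.1 (Finset.mem_range.1 hk))]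
        rw [map_mul, map_pow, ← hxy, Algebra.smul_def, mul_pow, hkN]
        ring
      _ = aeval x p * y ^ N := by rw [aeval_eq_sum_range, Finset.sum_mul]
      _ = y ^ N := by rw [hp, one_mul]
    simp only [P, map_sub, map_sum, aeval_monomial, map_pow, aeval_X, hsum, sub_self]
  have hcoeff : P.coeff N = p.coeff 0 - 1 := by
    rw [coeff_sub, finsetSum_coeff, coeff_X_pow_self, Finset.sum_eq_single 0]
    · simp
    · intro k hk hk0
      rw [coeff_monomial, if_neg]
      have := Finset.mem_range.1 hk
      omega
    · simp
  have hdeg : P.natDegree ≤ N :=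
    (natDegree_sub_le _ _).trans <| max_le
      (natDegree_sum_le_of_forall_le _ _ fun _ _ => (natDegree_monomial_le _).trans (Nat.sub_le _ _))
      (natDegree_X_pow_le N)
  by_cases hc : p.coeff 0 - 1 = 0
  · rw [hc, zero_smul]
    exact isIntegral_zero
  · have hlead : P.leadingCoeff = p.coeff 0 - 1 := by
      rw [leadingCoeff, natDegree_eq_of_le_of_coeff_ne_zero hdeg (hcoeff ▸ hc), hcoeff]
    exact hlead ▸ isIntegral_leadingCoeff_smul P y hP

namespace Subring

variable {S : Type u} [CommRing S] {R D : Subring S}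

@[simp]
theorem mem_condIdeal {r : D} {s : S} : r ∈ D.condIdeal s ↔ (r : S) * s ∈ D := Iff.rfl

theorem one_mem_condIdeal_smul_adjoin (hR : R.subtype.IsPrufer) (hRD : R ≤ D) (x : S) :
    (1 : S) ∈ D.condIdeal x • Subalgebra.toSubmodule (Algebra.adjoin D {x}) := by
  -- The conductor is the kernel of `d ↦ ([d], [d * x]) : S → (S ⧸ D)²`. Tensoring with the flat
  -- `R`-module `T = D[x]` keeps this a kernel, and `1 ⊗ 1` lies in it because `R → T` is an
  -- epimorphism: `1 ⊗ [x] = x ⊗ [1] = 0`.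
  set T := (Algebra.adjoin D {x}).toSubring
  have hRT : R.subtype.range ≤ T := by
    rw [Subring.range_subtype]
    exact fun r hr => Subalgebra.algebraMap_mem _ (⟨r, hRD hr⟩ : D)
  have hT := hR T hRT
  let : Algebra R T := (R.subtype.codRestrict T fun r => hRT (R.subtype.mem_range_self r)).toAlgebra
  have : Module.Flat R T := hT.1
  let Dm : Submodule R S :=
    { D.toAddSubgroup with smul_mem' := fun r _ hs => D.mul_mem (hRD r.2) hs }
  let ι : T →ₗ[R] S :=
    { toFun := fun τ => τ, map_add' := fun _ _ => rfl, map_smul' := fun _ _ => rfl }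
  let φ : S →ₗ[R] (S ⧸ Dm) × (S ⧸ Dm) := Dm.mkQ.prod (Dm.mkQ ∘ₗ LinearMap.mulRight R x)
  have hx : (1 : T) ⊗ₜ[R] Dm.mkQ x = 0 := by
    have := congrArg (LinearMap.lTensor T (Dm.mkQ ∘ₗ ι))
      (hT.tmul_one_eq_one_tmul ⟨x, Algebra.self_mem_adjoin_singleton D x⟩)
    change (⟨x, _⟩ : T) ⊗ₜ[R] Dm.mkQ 1 = (1 : T) ⊗ₜ[R] Dm.mkQ x at this
    rw [Submodule.mkQ_apply, (Submodule.Quotient.mk_eq_zero Dm).2 D.one_mem, tmul_zero] at this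
    exact this.symm
  have hexact := Module.Flat.lTensor_exact (M := T) (LinearMap.exact_subtype_ker_map φ)
  obtain ⟨ζ, hζ⟩ := (hexact ((1 : T) ⊗ₜ[R] (1 : S))).1 (by
    have h1 : φ 1 = LinearMap.inr R (S ⧸ Dm) (S ⧸ Dm) (Dm.mkQ x) := by
      simp [φ, (Submodule.Quotient.mk_eq_zero Dm).2 D.one_mem]
    rw [LinearMap.lTensor_tmul, h1, ← LinearMap.lTensor_tmul, hx, map_zero])
  let Ψ : T ⊗[R] S →ₗ[R] S := TensorProduct.lift ((LinearMap.mul R S).comp ι)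
  have hΨ (τ : T) (s : S) : Ψ (τ ⊗ₜ s) = τ * s := rfl
  have hΨker : ∀ ζ, Ψ (LinearMap.lTensor T (LinearMap.ker φ).subtype ζ) ∈
      D.condIdeal x • Subalgebra.toSubmodule (Algebra.adjoin D {x}) := by
    intro ζ
    induction ζ using TensorProduct.induction_on with
    | zero => simp
    | tmul τ κ =>
      have hκ : (κ : S) ∈ Dm ∧ (κ : S) * x ∈ Dm := by
        simpa [φ, Submodule.Quotient.mk_eq_zero, Prod.ext_iff] using κ.2
      rw [LinearMap.lTensor_tmul, hΨ, mul_comm]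
      exact Submodule.smul_mem_smul (r := (⟨κ, hκ.1⟩ : D)) hκ.2 τ.2
    | add ζ₁ ζ₂ h₁ h₂ => rw [map_add, map_add]; exact Submodule.add_mem _ h₁ h₂
  simpa [hζ, hΨ] using hΨker ζ

theorem exists_aeval_eq_one_of_isPrufer (hR : R.subtype.IsPrufer) (hRD : R ≤ D) (x : S) :
    ∃ p : D[X], (∀ n, p.coeff n ∈ D.condIdeal x) ∧ aeval x p = 1 := by
  have hle : D.condIdeal x • Subalgebra.toSubmodule (Algebra.adjoin D {x}) ≤
      (((D.condIdeal x).map (C : D →+* D[X])).restrictScalars D).map (aeval x).toLinearMap := by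
    rw [Submodule.smul_le]
    intro r hr m hm
    rw [Subalgebra.mem_toSubmodule, Algebra.adjoin_singleton_eq_range_aeval] at hm
    obtain ⟨q, rfl⟩ := hm
    exact ⟨C r * q, Ideal.mul_mem_right _ _ (Ideal.mem_map_of_mem _ hr), by simp [Algebra.smul_def]⟩
  obtain ⟨p, hp, hp1⟩ := hle (one_mem_condIdeal_smul_adjoin hR hRD x)
  exact ⟨p, Ideal.mem_map_C_iff.1 hp, hp1⟩

theorem mem_of_isIntegral_of_aeval_eq_one {θ : S} (hθ : IsIntegral D θ) {p : D[X]}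
    (hpI : ∀ n, p.coeff n ∈ D.condIdeal θ) (hp : aeval θ p = 1) : θ ∈ D := by
  set M := Subalgebra.toSubmodule (Algebra.adjoin D {θ})
  have hM : M ≤ D.condIdeal θ • M := by
    intro z hz
    rw [← mul_one z, ← hp, aeval_eq_sum_range, Finset.mul_sum]
    refine Submodule.sum_mem _ fun n _ => ?_
    rw [mul_smul_comm]
    exact Submodule.smul_mem_smul (hpI n)
      (Subalgebra.mul_mem _ hz (Subalgebra.pow_mem _ (Algebra.self_mem_adjoin_singleton D θ) n))
  obtain ⟨r, hr1, hr0⟩ := Submodule.exists_sub_one_mem_and_smul_eq_zero_of_fg_of_le_smul _ M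
    hθ.fg_adjoin_singleton hM
  have hr : r = 0 := by
    have h0 := hr0 1 (Subalgebra.one_mem _)
    rw [← Algebra.algebraMap_eq_smul_one] at h0
    exact Subtype.ext h0
  rw [hr, zero_sub, neg_mem_iff, mem_condIdeal] at hr1
  simpa using hr1

theorem mem_of_isIntegral_of_isPrufer (hR : R.subtype.IsPrufer) (hRD : R ≤ D) {θ : S}
    (hθ : IsIntegral D θ) : θ ∈ D :=
  let ⟨_, hpI, hp⟩ := exists_aeval_eq_one_of_isPrufer hR hRD θ
  mem_of_isIntegral_of_aeval_eq_one hθ hpI hp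

theorem exists_mul_eq_and_notMem_or_notMem (hR : R.subtype.IsPrufer) (hRD : R ≤ D)
    (q : Ideal D) [q.IsPrime] (t : S) : ∃ f g : D, (f : S) * t = g ∧ (f ∉ q ∨ g ∉ q) := by
  by_contra! H
  -- `H` puts the conductor of `t` into `q`; we find `w` with `w * t ∈ D \\ q` whose conductor also
  -- lies in `q`, and then an element of `D \ q` multiplying `t` into `D`.
  obtain ⟨p, hpI, hp⟩ := exists_aeval_eq_one_of_isPrufer hR hRD t
  set w := aeval t p.divX
  have hwt : w * t = algebraMap D S (1 - p.coeff 0) := by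
    rw [map_sub, map_one, ← hp, ← aeval_divX_mul_add p t, add_sub_cancel_right]
  have hc : p.coeff 0 ∈ q := (H _ ⟨_, hpI 0⟩ rfl).1
  have h1c : 1 - p.coeff 0 ∉ q := fun h => q.one_notMem ((Submodule.sub_mem_iff_left q hc).1 h)
  have hwq : D.condIdeal w ≤ q := by
    intro f hf
    have hfc := (H ⟨_, hf⟩ (f * (1 - p.coeff 0)) (by rw [mul_assoc, hwt]; rfl)).2
    exact (Ideal.IsPrime.mem_or_mem ‹_› hfc).resolve_right h1c
  obtain ⟨p', hp'I, hp'⟩ := exists_aeval_eq_one_of_isPrufer hR hRD w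
  have hθ := mem_of_isIntegral_of_isPrufer hR hRD (isIntegral_coeff_zero_sub_one_smul hwt hp')
  have hq := (H _ ⟨_, hθ⟩ rfl).1
  exact q.one_notMem ((Submodule.sub_mem_iff_right q (hwq (hp'I 0))).1 hq)

variable {U : Subring S}

theorem forall_mul_mem_imp_or_forall_mul_mem_imp (hmanis : ∀ x y : S, x ∉ U → y ∉ U → x * y ∉ U)
    (x y : S) : (∀ z, z * x ∈ U → z * y ∈ U) ∨ (∀ z, z * y ∈ U → z * x ∈ U) := by
  by_contra! h
  obtain ⟨⟨z, hzx, hzy⟩, ⟨z', hz'y, hz'x⟩⟩ := h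
  apply hmanis _ _ hzy hz'x
  rw [show z * y * (z' * x) = z * x * (z' * y) by ring]
  exact U.mul_mem hzx hz'y

theorem exists_mul_mem_and_mul_notMem (hR : R.subtype.IsPrufer) {A B : Subring S}
    (hRAB : R ≤ A ⊓ B) (hAB : A ⊓ B ≤ U) {a b : S} (ha : a ∈ A) (hb : b ∈ B) (hbU : b ∉ U) :
    ∃ z, z * a ∈ U ∧ z * b ∉ U := by
  by_contra! hab
  obtain ⟨p, hpI, hp⟩ := exists_aeval_eq_one_of_isPrufer hR hRAB a
  have hwa : aeval a p.divX * a = 1 - (p.coeff 0 : S) := by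
    rw [← hp, ← aeval_divX_mul_add p a]
    exact (add_sub_cancel_right _ _).symm
  let Ib : Ideal (A ⊓ B : Subring S) := (U.condIdeal b).comap (Subring.inclusion hAB)
  have hIb : ∀ d : (A ⊓ B : Subring S), (d : S) * b ∈ U → d ∈ Ib := fun _ h => h
  have hIb_ne : Ib ≠ ⊤ := by
    refine Ideal.comap_ne_top _ fun h => hbU ?_
    simpa using (Ideal.eq_top_iff_one _).1 h
  obtain ⟨q, hq, hIbq⟩ := Ideal.exists_le_maximal Ib hIb_ne
  have := hq.isPrime
  obtain ⟨f, g, hfg, hnot⟩ := exists_mul_eq_and_notMem_or_notMem hR hRAB q (aeval a p.divX * b)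
  have hga : (g : S) * a = ((f * (1 - p.coeff 0) : (A ⊓ B : Subring S)) : S) * b := by
    rw [← hfg]
    push_cast
    rw [← hwa]
    ring
  have hgaU : (g : S) * a ∈ U :=
    hAB ⟨A.mul_mem g.2.1 ha, hga ▸ B.mul_mem (f * (1 - p.coeff 0)).2.2 hb⟩
  have hg : g ∈ q := hIbq (hIb _ (hab _ hgaU))
  have hc : p.coeff 0 ∈ q := hIbq (hIb _ (hab _ (hAB (hpI 0))))
  have hfc : f * (1 - p.coeff 0) ∈ q := hIbq (hIb _ (hga ▸ hgaU))
  have h1c : 1 - p.coeff 0 ∉ q := fun h => q.one_notMem ((Submodule.sub_mem_iff_left q hc).1 h)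
  have hf : f ∈ q := (hq.isPrime.mem_or_mem hfc).resolve_right h1c
  exact hnot.elim (· hf) (· hg)

theorem le_or_le_of_inf_le (hR : R.subtype.IsPrufer)
    (hmanis : ∀ x y : S, x ∉ U → y ∉ U → x * y ∉ U) {A B : Subring S} (hRA : R ≤ A) (hRB : R ≤ B)
    (hAB : A ⊓ B ≤ U) : A ≤ U ∨ B ≤ U := by
  by_contra! h
  obtain ⟨a, ha, haU⟩ := SetLike.not_le_iff_exists.1 h.1
  obtain ⟨b, hb, hbU⟩ := SetLike.not_le_iff_exists.1 h.2
  rcases forall_mul_mem_imp_or_forall_mul_mem_imp hmanis a b with hab | hba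
  · obtain ⟨z, hza, hzb⟩ := exists_mul_mem_and_mul_notMem hR (le_inf hRA hRB) hAB ha hb hbU
    exact hzb (hab z hza)
  · obtain ⟨z, hzb, hza⟩ :=
      exists_mul_mem_and_mul_notMem hR (le_inf hRB hRA) (inf_comm A B ▸ hAB) hb ha haU
    exact hza (hba z hzb)

theorem exists_le_of_biInf_le (hR : R.subtype.IsPrufer)
    (hmanis : ∀ x y : S, x ∉ U → y ∉ U → x * y ∉ U) {ι : Type*} {s : Finset ι}
    (hs : s.Nonempty) {B : ι → Subring S} (hRB : ∀ i ∈ s, R ≤ B i) (hsU : ⨅ i ∈ s, B i ≤ U) :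
    ∃ i ∈ s, B i ≤ U := by
  classical
  induction hs using Finset.Nonempty.cons_induction with
  | singleton i => exact ⟨i, Finset.mem_singleton_self i, by simpa using hsU⟩
  | cons i s hi hs ih =>
    rw [Finset.cons_eq_insert, Finset.iInf_insert] at hsU
    rcases le_or_le_of_inf_le hR hmanis (hRB i (by simp))
      (le_iInf₂ fun j hj => hRB j (by simp [hj])) hsU with h | h
    · exact ⟨i, by simp, h⟩
    · obtain ⟨j, hj, hjU⟩ := ih (fun j hj => hRB j (by simp [hj])) h
      exact ⟨j, by simp [hj], hjU⟩

end Subring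

theorem exists_le_of_iInter_le_pruferManis_general {S : Type*} [CommRing S] (R : Subring S)
    (hR : R.subtype.IsPrufer) (n : ℕ) (hn : 0 < n)
    (U : Subring S) (B : Fin n → Subring S)
    (hRB : ∀ i : Fin n, R ≤ B i)
    (hinter : (⋂ i : Fin n, (B i : Set S)) ⊆ (U : Set S))
    (hmanis : ∀ x y : S, x ∉ U → y ∉ U → x * y ∉ U) :
    ∃ i : Fin n, B i ≤ U := by
  have hBU : ⨅ i ∈ Finset.univ, B i ≤ U := by
    simpa [← SetLike.coe_subset_coe, Subring.coe_iInf] using hinter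
  obtain ⟨i, -, hi⟩ := Subring.exists_le_of_biInf_le hR hmanis
    (Finset.univ_nonempty_iff.2 ⟨⟨0, hn⟩⟩) (fun i _ => hRB i) hBU
  exact ⟨i, hi⟩

/-- Let `R ⊆ S` be a Prüfer extension and `U, B₁, …, Bₙ` intermediate rings
with `B₁ ∩ ⋯ ∩ Bₙ ⊆ U`, the extension `U ⊆ S` Prüfer and `S \ U` multiplicatively closed
(i.e. `U ⊆ S` Prüfer–Manis).  Then `Bᵢ ⊆ U` for some `i`. -/
theorem exists_le_of_iInter_le_pruferManis {S : Type*} [CommRing S] (R : Subring S)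
    (hR : R.subtype.IsPrufer) (n : ℕ) (hn : 0 < n)
    (U : Subring S) (B : Fin n → Subring S)
    (hRU : R ≤ U) (hRB : ∀ i : Fin n, R ≤ B i)
    (hinter : (⋂ i : Fin n, (B i : Set S)) ⊆ (U : Set S))
    (hU : U.subtype.IsPrufer)
    (hmanis : ∀ x y : S, x ∉ U → y ∉ U → x * y ∉ U) :
    ∃ i : Fin n, B i ≤ U :=
  exists_le_of_iInter_le_pruferManis_general R hR n hn U B hRB hinter hmanis
end

section
/- Let R ⊆ S be an extension of commutative rings and let T, T₁, …, Tₙ be intermediate rings with R ⊆ T, Tᵢ ⊆ S, such that T is a localization of R at some multiplicatively closed subset Σ of R (i.e., T = R_Σ inside S), and for each i the inclusion R → Tᵢ is a flat epimorphism. If T ⊆ T₁ ∪ ⋯ ∪ Tₙ, then T ⊆ Tᵢ for some i. -/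
universe u v

/-!
Each `Tᵢ` either inverts every element of `Σ`, and then contains `T = R_Σ`, or misses the
inverse of some `σᵢ ∈ Σ`. If the second case occurred for every `i`, the inverse of
`σ₁ ⋯ σₙ ∈ Σ` would lie in `T` and hence in some `Tᵢ`; multiplying it by the `σⱼ` with
`j ≠ i` would then give an inverse of `σᵢ` in `Tᵢ`.
-/

namespace Subring

variable {S : Type*} [CommRing S]

theorem exists_mul_eq_one_of_prod_mul_eq_one {ι : Type*} [Fintype ι] (A : Subring S)
    {s : ι → S} (hs : ∀ j, s j ∈ A) {v : S} (hv : v ∈ A) (h : (∏ j, s j) * v = 1) (i : ι) :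
    ∃ u ∈ A, s i * u = 1 := by
  classical
  refine ⟨v * ∏ j ∈ Finset.univ.erase i, s j,
    A.mul_mem hv (A.prod_mem fun j _ => hs j), ?_⟩
  rw [← h, ← Finset.mul_prod_erase _ s (Finset.mem_univ i)]
  ring

theorem exists_mul_eq_one_of_isLocalization {R T : Subring S} (hRT : R ≤ T) (M : Submonoid R)
    (hloc : letI := (Subring.inclusion hRT).toAlgebra; IsLocalization M T) {σ : R} (hσ : σ ∈ M) :
    ∃ v ∈ T, (σ : S) * v = 1 := by
  let := (Subring.inclusion hRT).toAlgebra
  obtain ⟨v, hv⟩ := (IsLocalization.map_units T ⟨σ, hσ⟩).exists_right_inv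
  exact ⟨v, v.2, congrArg Subtype.val hv⟩

theorem le_of_isLocalization {R T A : Subring S} (hRT : R ≤ T) (M : Submonoid R)
    (hloc : letI := (Subring.inclusion hRT).toAlgebra; IsLocalization M T) (hRA : R ≤ A)
    (hinv : ∀ σ ∈ M, ∃ u ∈ A, (σ : S) * u = 1) : T ≤ A := by
  let := (Subring.inclusion hRT).toAlgebra
  intro t ht
  obtain ⟨⟨r, σ⟩, hrσ⟩ := IsLocalization.surj M (⟨t, ht⟩ : T)
  obtain ⟨u, hu, hσu⟩ := hinv σ σ.2
  have htσ : t * ((σ : R) : S) = r := congrArg Subtype.val hrσ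
  have ht_eq : t = r * u := by
    calc t = t * (((σ : R) : S) * u) := by rw [hσu, mul_one]
      _ = r * u := by rw [← mul_assoc, htσ]
  exact ht_eq ▸ A.mul_mem (hRA r.2) hu

end Subring

theorem localization_avoidance_flatEpi_general {S : Type*} [CommRing S] (R T : Subring S)
    (hRT : R ≤ T) (M : Submonoid R)
    (hloc : letI := (Subring.inclusion hRT).toAlgebra; IsLocalization M T)
    (n : ℕ) (T' : Fin n → Subring S) (hRT' : ∀ i : Fin n, R ≤ T' i)
    (hsub : (T : Set S) ⊆ ⋃ i : Fin n, (T' i : Set S)) :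
    ∃ i : Fin n, T ≤ T' i := by
  by_contra! hnot
  have hmiss : ∀ i, ∃ σ ∈ M, ∀ u ∈ T' i, (σ : S) * u ≠ 1 := fun i => by
    by_contra! hall
    exact hnot i (Subring.le_of_isLocalization hRT M hloc (hRT' i) hall)
  choose σ hσM hσ using hmiss
  obtain ⟨v, hvT, hv⟩ := Subring.exists_mul_eq_one_of_isLocalization hRT M hloc
    (σ := ∏ i, σ i) (M.prod_mem fun i _ => hσM i)
  obtain ⟨i, hvi⟩ := Set.mem_iUnion.mp (hsub hvT)
  obtain ⟨u, hu, hσu⟩ := (T' i).exists_mul_eq_one_of_prod_mul_eq_one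
    (fun j => hRT' i (σ j).2) hvi (by rwa [SubmonoidClass.coe_finsetProd] at hv) i
  exact hσ i u hu hσu

/-- Let `R ⊆ T, T₁, …, Tₙ ⊆ S` with `T = R_Σ` a localization of `R` inside
`S` and each `R → Tᵢ` a flat epimorphism.  If `T ⊆ T₁ ∪ ⋯ ∪ Tₙ`, then `T ⊆ Tᵢ` for some `i`. -/
theorem localization_avoidance_flatEpi {S : Type*} [CommRing S] (R T : Subring S)
    (hRT : R ≤ T) (M : Submonoid R)
    (hloc : letI := (Subring.inclusion hRT).toAlgebra; IsLocalization M T)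
    (n : ℕ) (T' : Fin n → Subring S) (hRT' : ∀ i : Fin n, R ≤ T' i)
    (hfe : ∀ i : Fin n, (Subring.inclusion (hRT' i)).IsFlatEpi)
    (hsub : (T : Set S) ⊆ ⋃ i : Fin n, (T' i : Set S)) :
    ∃ i : Fin n, T ≤ T' i :=
  localization_avoidance_flatEpi_general R T hRT M hloc n T' hRT' hsub
end

section
/- Let S be a commutative ring, I an ideal of S, φ : S → S/I the canonical projection, R' a subring of S' := S/I, and R := φ⁻¹(R') the pullback subring of S. Then R ⊆ S is a Prüfer extension if and only if R' ⊆ S' is a Prüfer extension. -/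
/-!
An extension `R ⊆ T` is a flat epimorphism iff for every `t ∈ T` the conductor `(R :_R t)`
generates the unit ideal of `T`. Elements of these conductors witness that every relation in `T`
is trivial over `R` and that ring maps agreeing on `R` agree on `T`; conversely, flatness makes
the vanishing of `t ⊗ 1 - 1 ⊗ t` in `T ⊗_R T` trivial, and the coefficients of the
trivialisation are conductor elements of `t` summing to `1`.

Since `R = φ⁻¹(R')` contains `ker φ`, its overrings are exactly the `φ⁻¹(T')` with `R' ⊆ T'`.
The conductor condition passes through `φ` in both directions: `φ` maps conductors onto
conductors, and an ideal of `T` containing `ker φ` whose image is the unit ideal is the unit ideal.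
-/

universe u v

open TensorProduct

theorem Ideal.exists_sum_mul_eq_one_of_map_eq_top {A B : Type*} [CommRing A] [CommRing B]
    (f : A →+* B) {J : Ideal A} (hJ : J.map f = ⊤) :
    ∃ (n : ℕ) (u : Fin n → B) (y : Fin n → A), (∀ i, y i ∈ J) ∧ ∑ i, u i * f (y i) = 1 := by
  obtain ⟨n, u, g, hg⟩ := Submodule.mem_span_set'.mp (hJ ▸ Submodule.mem_top : (1 : B) ∈ J.map f)
  choose y hyJ hy using fun i => (g i).2
  exact ⟨n, u, y, hyJ, by rw [← hg]; simp only [hy, smul_eq_mul]⟩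

theorem Algebra.IsEpi.of_right_cancel {A : Type*} {B : Type v} [CommRing A] [CommRing B]
    [Algebra A B] (h : ∀ ⦃C : Type v⦄ [CommRing C] (g₁ g₂ : B →+* C),
      g₁.comp (algebraMap A B) = g₂.comp (algebraMap A B) → g₁ = g₂) :
    Algebra.IsEpi A B := by
  refine (Algebra.isEpi_iff_forall_one_tmul_eq A B).mpr fun b => ?_
  refine (RingHom.congr_fun (h (C := B ⊗[A] B) Algebra.TensorProduct.includeLeftRingHom
    Algebra.TensorProduct.includeRight.toRingHom (RingHom.ext fun a => ?_)) b).symm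
  exact Algebra.TensorProduct.tmul_one_eq_one_tmul a

namespace Subring

variable {S : Type*} [CommRing S] {R T : Subring S}

def ConductorsGenerate (h : R ≤ T) : Prop :=
  ∀ t : T, (R.condIdeal t).map (inclusion h) = ⊤

namespace ConductorsGenerate

variable {h : R ≤ T}

theorem map_iInf_condIdeal_eq_top (hc : ConductorsGenerate h) {ι : Type*} [Fintype ι]
    (x : ι → T) : (⨅ i, R.condIdeal (x i)).map (inclusion h) = ⊤ := by
  refine eq_top_iff.mpr ?_
  calc ⊤ = ∏ i, (R.condIdeal (x i)).map (inclusion h) := by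
        simp only [hc (x _), ← Ideal.one_eq_top, Finset.prod_const_one]
    _ = (∏ i, R.condIdeal (x i)).map (inclusion h) := (map_prod (Ideal.mapHom _) _ _).symm
    _ ≤ (⨅ i, R.condIdeal (x i)).map (inclusion h) := by
        refine Ideal.map_mono (Ideal.prod_le_inf.trans ?_)
        simp [Finset.inf_eq_iInf]

theorem ringHom_ext (hc : ConductorsGenerate h) {C : Type*} [CommRing C] {g₁ g₂ : T →+* C}
    (hg : g₁.comp (inclusion h) = g₂.comp (inclusion h)) : g₁ = g₂ := by
  ext t
  have hR (r : R) : g₁ (inclusion h r) = g₂ (inclusion h r) := RingHom.congr_fun hg r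
  -- every conductor element `x` of `t` kills `g₁ t - g₂ t`, and they generate `T`
  have hann : ((R.condIdeal t).map (g₁.comp (inclusion h))) ≤
      (Ideal.span {g₁ t - g₂ t}).annihilator := by
    refine Ideal.map_le_iff_le_comap.mpr fun x hx => ?_
    have hxt : inclusion h ⟨_, hx⟩ = inclusion h x * t := rfl
    have := hR ⟨_, hx⟩
    rw [hxt, map_mul, map_mul] at this
    rw [Ideal.mem_comap, Submodule.mem_annihilator_span_singleton, smul_eq_mul, mul_sub,
      RingHom.comp_apply, this, hR x, sub_self]
  rw [← Ideal.map_map, hc t, Ideal.map_top, top_le_iff] at hann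
  have h1 : (1 : C) ∈ (Ideal.span {g₁ t - g₂ t}).annihilator := hann ▸ Submodule.mem_top
  rwa [Submodule.mem_annihilator_span_singleton, one_smul, sub_eq_zero] at h1

theorem flat (hc : ConductorsGenerate h) :
    letI := (inclusion h).toAlgebra; Module.Flat R T := by
  let := (inclusion h).toAlgebra
  refine Module.Flat.of_forall_isTrivialRelation fun {l c x} hcx => ?_
  obtain ⟨n, u, y, hy, hyu⟩ :=
    Ideal.exists_sum_mul_eq_one_of_map_eq_top _ (hc.map_iInf_condIdeal_eq_top x)
  have hyx (j : Fin n) (i : Fin l) : (y j : S) * x i ∈ R :=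
    Submodule.mem_iInf _ |>.mp (hy j) i
  -- `x i = ∑ j, (y j * x i) • u j` and `∑ i, c i * (y j * x i) = y j * ∑ i, c i • x i = 0`
  refine ⟨n, fun i j => ⟨_, hyx j i⟩, u, fun i => ?_, fun j => ?_⟩
  · have hsmul (j : Fin n) : (⟨_, hyx j i⟩ : R) • u j = x i * (u j * inclusion h (y j)) :=
      Subtype.ext <| by
        simp only [Algebra.smul_def, RingHom.algebraMap_toAlgebra, coe_mul, coe_inclusion]
        ring
    simp only [hsmul, ← Finset.mul_sum, hyu, mul_one]
  · have hcx' : ∑ i, (c i : S) * x i = 0 := by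
      simpa [Algebra.smul_def, RingHom.algebraMap_toAlgebra] using congrArg ((↑) : T → S) hcx
    ext
    simp only [AddSubmonoidClass.coe_finsetSum, coe_mul, ZeroMemClass.coe_zero]
    calc ∑ i, (c i : S) * (y j * x i) = y j * ∑ i, (c i : S) * x i := by
          rw [Finset.mul_sum]; exact Finset.sum_congr rfl fun i _ => by ring
      _ = 0 := by rw [hcx', mul_zero]

end ConductorsGenerate

theorem conductorsGenerate_of_isFlatEpi {h : R ≤ T} (hfe : (inclusion h).IsFlatEpi) :
    ConductorsGenerate h := by
  let := (inclusion h).toAlgebra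
  obtain ⟨hflat, hepi⟩ := hfe
  have htmul : ∀ t : T, 1 ⊗ₜ[R] t = t ⊗ₜ[R] 1 :=
    (Algebra.isEpi_iff_forall_one_tmul_eq R T).mp (Algebra.IsEpi.of_right_cancel hepi)
  intro t
  have hrel : ∑ i, ![t, -1] i ⊗ₜ[R] ![1, t] i = 0 := by
    simp [Fin.sum_univ_two, TensorProduct.neg_tmul, ← htmul t]
  obtain ⟨k, a, y, hy, ha⟩ :=
    TensorProduct.vanishesTrivially_of_sum_tmul_eq_zero_of_rTensor_injective R
      (Module.Flat.rTensor_preserves_injective_linearMap _ (Submodule.injective_subtype _)) hrel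
  have hcond (j : Fin k) : a 0 j ∈ R.condIdeal t := by
    have hj : (a 0 j : S) * t + -(a 1 j : S) = 0 := by
      simpa [Fin.sum_univ_two, Algebra.smul_def, RingHom.algebraMap_toAlgebra] using
        congrArg ((↑) : T → S) (ha j)
    show (a 0 j : S) * t ∈ R
    rw [add_neg_eq_zero.mp hj]
    exact (a 1 j).2
  rw [Ideal.eq_top_iff_one, show (1 : T) = ∑ j, a 0 j • y j from hy 0]
  refine Ideal.sum_mem _ fun j _ => ?_
  rw [Algebra.smul_def, mul_comm]
  exact Ideal.mul_mem_left _ _ (Ideal.mem_map_of_mem _ (hcond j))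

theorem isFlatEpi_inclusion_iff (h : R ≤ T) :
    (inclusion h).IsFlatEpi ↔ ConductorsGenerate h :=
  ⟨conductorsGenerate_of_isFlatEpi, fun hc => ⟨hc.flat, fun _ _ _ _ => hc.ringHom_ext⟩⟩

theorem isPrufer_subtype_iff : R.subtype.IsPrufer ↔ ∀ T (h : R ≤ T), ConductorsGenerate h := by
  simp only [RingHom.IsPrufer, range_subtype]
  exact forall_congr' fun T => forall_congr' fun h => isFlatEpi_inclusion_iff h

variable {S' : Type*} [CommRing S'] {f : S →+* S'}

theorem conductorsGenerate_iff_of_map_eq {R' T' : Subring S'} (h : R'.comap f ≤ T)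
    (h' : R' ≤ T') (hT : T.map f = T') : ConductorsGenerate h ↔ ConductorsGenerate h' := by
  subst hT
  set ψ : T →+* T.map f := f.restrict T (T.map f) fun x hx => ⟨x, hx, rfl⟩
  set ρ : R'.comap f →+* R' := f.restrict (R'.comap f) R' fun x hx => hx
  have hψ : Function.Surjective ψ := by
    rintro ⟨_, x, hx, rfl⟩
    exact ⟨⟨x, hx⟩, rfl⟩
  have hcomm : ψ.comp (inclusion h) = (inclusion h').comp ρ := rfl
  have hcond (t : T) : ((R'.comap f).condIdeal t).map ρ = R'.condIdeal (ψ t) := by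
    refine le_antisymm (Ideal.map_le_iff_le_comap.mpr fun x hx => ?_) fun r hr => ?_
    · show f x * f t ∈ R'
      rw [← map_mul]
      exact hx
    · obtain ⟨x, -, hx⟩ := h' r.2
      have hxR : x ∈ R'.comap f := by rw [mem_comap, hx]; exact r.2
      rw [show r = ρ ⟨x, hxR⟩ from Subtype.ext hx.symm]
      refine Ideal.mem_map_of_mem _ ?_
      show f (x * t) ∈ R'
      rw [map_mul, hx]
      exact hr
  have hmap (t : T) : (((R'.comap f).condIdeal t).map (inclusion h)).map ψ =
      (R'.condIdeal (ψ t)).map (inclusion h') := by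
    rw [Ideal.map_map, hcomm, ← Ideal.map_map, hcond]
  constructor
  · intro hc t'
    obtain ⟨t, rfl⟩ := hψ t'
    rw [← hmap, hc t, Ideal.map_top]
  · intro hc t
    have hker : RingHom.ker ψ ≤ ((R'.comap f).condIdeal t).map (inclusion h) := fun x hx => by
      have hfx : f x = 0 := congrArg Subtype.val hx
      have hxR : (x : S) ∈ R'.comap f := by rw [mem_comap, hfx]; exact R'.zero_mem
      have hxt : (⟨x, hxR⟩ : R'.comap f) ∈ (R'.comap f).condIdeal t := by
        show f (x * t) ∈ R'
        rw [map_mul, hfx, zero_mul]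
        exact R'.zero_mem
      exact Ideal.mem_map_of_mem _ hxt
    -- an ideal containing `ker ψ` is the preimage of its image
    rw [← sup_eq_left.mpr hker, RingHom.ker_eq_comap_bot, ← Ideal.comap_map_of_surjective ψ hψ,
      hmap, hc, Ideal.comap_top]

theorem isPrufer_comap_subtype_iff (hf : Function.Surjective f) (R' : Subring S') :
    (R'.comap f).subtype.IsPrufer ↔ R'.subtype.IsPrufer := by
  rw [isPrufer_subtype_iff, isPrufer_subtype_iff]
  constructor
  · intro hc T' h'
    exact (conductorsGenerate_iff_of_map_eq ((gc_map_comap f).monotone_u h') h'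
      (map_comap_eq_self_of_surjective hf T')).mp (hc _ _)
  · intro hc T h
    have h' : R' ≤ T.map f :=
      (map_comap_eq_self_of_surjective hf R').ge.trans ((gc_map_comap f).monotone_l h)
    exact (conductorsGenerate_iff_of_map_eq h h' rfl).mpr (hc _ _)

end Subring

/-- Let `I` be an ideal of `S`, `φ : S → S/I` the projection, `R'` a subring
of `S' := S/I` and `R := φ⁻¹(R')`.  Then `R ⊆ S` is Prüfer iff `R' ⊆ S'` is Prüfer. -/
theorem prufer_pullback_quotient {S : Type*} [CommRing S] (I : Ideal S)
    (R' : Subring (S ⧸ I)) :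
    (Subring.comap (Ideal.Quotient.mk I) R').subtype.IsPrufer ↔ R'.subtype.IsPrufer :=
  Subring.isPrufer_comap_subtype_iff Ideal.Quotient.mk_surjective R'
end

section
/- Let R ⊆ S be an extension of commutative rings with R local. Then R ⊆ S is a Prüfer extension if and only if every element s ∈ S \ R is invertible in S with s⁻¹ ∈ R. -/
universe u v

/-!
If every `s ∉ R` has an inverse in `R`, then every intermediate ring `T` is the localization of
`R` at the elements that become units in `T`, and localizations are flat epimorphisms.

Conversely, let `R ⊆ S` be Prüfer, `s ∉ R` and `T = R[s]`. As `R → T` is an epimorphism,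
`T ⊗_R (T/R) = 0`; tensoring the injection `R/(R :_R s) → T/R`, `r ↦ r s`, with the flat
`R`-module `T` shows that the conductor `(R :_R s) ⊆ 𝔪` extends to the unit ideal of `T`.
So `p(s) = 1` for a polynomial `p` with coefficients in `𝔪`, and since `1 - p(0)` is a unit,
`s` is invertible. If `u = s⁻¹` were not in `R`, the same argument gives `q(u) = 1` with `q`
over `𝔪`, which makes `s` integral over `R`. Then `R[s]` is a finite `R`-module with
`𝔪 R[s] = R[s]`, so `R[s] = 0` by Nakayama, contradicting `s ∉ R`.
-/

open TensorProduct

theorem IsLocalization.of_forall_mem_range_or_mul_eq_one {A B : Type*} [CommRing A] [CommRing B]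
    [Algebra A B] (hinj : Function.Injective (algebraMap A B))
    (h : ∀ b : B, b ∈ (algebraMap A B).range ∨ ∃ a, algebraMap A B a * b = 1) :
    IsLocalization ((IsUnit.submonoid B).comap (algebraMap A B)) B := by
  refine ⟨fun a ↦ a.2, fun b ↦ ?_, fun hxy ↦ ⟨1, by rw [hinj hxy]⟩⟩
  rcases h b with ⟨a, rfl⟩ | ⟨a, ha⟩
  · exact ⟨(a, 1), by simp⟩
  · exact ⟨(1, ⟨a, IsUnit.of_mul_eq_one _ ha⟩), by simpa [mul_comm] using ha⟩

theorem RingHom.IsFlatEpi.of_isLocalization {A B : Type*} [CommRing A] [CommRing B] {f : A →+* B}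
    (M : Submonoid A) (hM : letI := f.toAlgebra; IsLocalization M B) : f.IsFlatEpi := by
  let := f.toAlgebra
  exact ⟨IsLocalization.flat B M, fun _ _ g h hgh ↦ IsLocalization.ringHom_ext M hgh⟩

theorem Algebra.IsEpi.subsingleton_tensorProduct_quotient_range {R A : Type*} [CommRing R]
    [CommRing A] [Algebra R A] [Algebra.IsEpi R A] :
    Subsingleton (A ⊗[R] (A ⧸ LinearMap.range (Algebra.linearMap R A))) := by
  set N := LinearMap.range (Algebra.linearMap R A)
  have hone : N.mkQ 1 = 0 := (Submodule.Quotient.mk_eq_zero N).2 ⟨1, map_one (algebraMap R A)⟩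
  refine subsingleton_of_forall_eq 0 fun z ↦ ?_
  induction z with
  | zero => rfl
  | add x y hx hy => rw [hx, hy, add_zero]
  | tmul a c =>
    obtain ⟨b, rfl⟩ := N.mkQ_surjective c
    have hab : a ⊗ₜ[R] b = (a * b) ⊗ₜ[R] 1 := by
      rw [← mul_one a, ← one_mul b, ← Algebra.TensorProduct.tmul_mul_tmul,
        Algebra.tmul_comm R 1 b, Algebra.TensorProduct.tmul_mul_tmul, mul_one, mul_one, one_mul]
    rw [← LinearMap.lTensor_tmul, hab, LinearMap.lTensor_tmul, hone, tmul_zero]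

theorem Ideal.map_algebraMap_eq_top_of_flat_of_isEpi {R A : Type*} [CommRing R] [CommRing A]
    [Algebra R A] [Module.Flat R A] [Algebra.IsEpi R A] (b : A) {J : Ideal R}
    (hJ : ∀ r : R, r • b ∈ (algebraMap R A).range → r ∈ J) :
    J.map (algebraMap R A) = ⊤ := by
  set N := LinearMap.range (Algebra.linearMap R A)
  set ψ : R →ₗ[R] A ⧸ N := N.mkQ ∘ₗ LinearMap.toSpanSingleton R A b
  have hker : LinearMap.ker ψ ≤ J := fun r hr ↦ hJ r ((Submodule.Quotient.mk_eq_zero N).1 hr)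
  have hinj :
      Function.Injective ((LinearMap.range ψ).subtype ∘ₗ ψ.quotKerEquivRange.toLinearMap) :=
    (LinearMap.range ψ).injective_subtype.comp ψ.quotKerEquivRange.injective
  have := Algebra.IsEpi.subsingleton_tensorProduct_quotient_range (R := R) (A := A)
  have : Subsingleton (A ⊗[R] (R ⧸ LinearMap.ker ψ)) :=
    (Module.Flat.lTensor_preserves_injective_linearMap _ hinj).subsingleton
  have htop : LinearMap.ker ψ • (⊤ : Submodule R A) = ⊤ := by
    rw [← Submodule.Quotient.subsingleton_iff]
    exact (TensorProduct.tensorQuotEquivQuotSMul A _).symm.toEquiv.subsingleton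
  rw [Ideal.smul_top_eq_map, Submodule.restrictScalars_eq_top_iff] at htop
  exact eq_top_mono (Ideal.map_mono hker) htop

theorem RingHom.IsFlatEpi.isEpi {A B : Type u} [CommRing A] [CommRing B] {f : A →+* B}
    (hf : f.IsFlatEpi) : letI := f.toAlgebra; Algebra.IsEpi A B := by
  let := f.toAlgebra
  refine (Algebra.isEpi_iff_forall_one_tmul_eq A B).2 fun b ↦ ?_
  have hext : (Algebra.TensorProduct.includeRight (R := A) (A := B) (B := B)).toRingHom.comp f =
      (Algebra.TensorProduct.includeLeftRingHom (R := A) (A := B) (B := B)).comp f := by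
    ext a
    exact (Algebra.TensorProduct.tmul_one_eq_one_tmul a).symm
  exact RingHom.congr_fun (hf.2 _ _ hext) b

theorem RingHom.IsFlatEpi.map_eq_top {A B : Type u} [CommRing A] [CommRing B] {f : A →+* B}
    (hf : f.IsFlatEpi) (b : B) {J : Ideal A} (hJ : ∀ a : A, f a * b ∈ f.range → a ∈ J) :
    J.map f = ⊤ := by
  let := f.toAlgebra
  have := hf.1
  have := hf.isEpi
  exact Ideal.map_algebraMap_eq_top_of_flat_of_isEpi b hJ

open Polynomial IsLocalRing

namespace IsLocalRing

variable {R S : Type*} [CommRing R] [IsLocalRing R] [CommRing S] [Algebra R S] {p : R[X]}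

theorem isUnit_of_aeval_eq_one {s : S} (h0 : p.coeff 0 ∈ maximalIdeal R) (h : aeval s p = 1) :
    IsUnit s := by
  have hp := congrArg (aeval s) (X_mul_divX_add p)
  rw [map_add, map_mul, aeval_X, aeval_C, h, ← eq_sub_iff_add_eq, ← map_one (algebraMap R S),
    ← map_sub] at hp
  exact isUnit_of_mul_isUnit_left (hp ▸ (isUnit_one_sub_self_of_mem_nonunits _ h0).map _)

theorem isIntegral_of_mul_eq_one_of_aeval_eq_one {s u : S} (hsu : s * u = 1)
    (h0 : p.coeff 0 ∈ maximalIdeal R) (h : aeval u p = 1) : IsIntegral R s := by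
  -- `u · (divX p)(u) = 1 - p(0)` is a unit; clearing the denominators `u = s⁻¹` of
  -- `(divX p)(u)` turns this into a monic equation for `s`, via the reversal of `divX p`.
  obtain ⟨v, hv⟩ := isUnit_one_sub_self_of_mem_nonunits _ h0
  have huw : u * aeval u p.divX = algebraMap R S v := by
    have hp := congrArg (aeval u) (X_mul_divX_add p)
    rw [map_add, map_mul, aeval_X, aeval_C, h, ← eq_sub_iff_add_eq] at hp
    rw [hp, hv, map_sub, map_one]
  set d := p.divX.natDegree
  let : Invertible u := invertibleOfRightInverse u s (by rw [mul_comm, hsu])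
  have hrefl : aeval s (reflect d p.divX) * u ^ d = aeval u p.divX := by
    rw [aeval_def, aeval_def]
    exact eval₂_reflect_mul_pow (algebraMap R S) u d p.divX le_rfl
  have hrefl' : aeval s (reflect d p.divX) = s ^ d * aeval u p.divX := by
    rw [← hrefl, mul_left_comm, ← mul_pow, hsu, one_pow, mul_one]
  have hpow : s ^ (d + 1) = aeval s (C (↑v⁻¹ : R) * reflect d p.divX) := by
    calc s ^ (d + 1) = algebraMap R S ↑v⁻¹ * (algebraMap R S v * s ^ (d + 1)) := by
          rw [← mul_assoc, ← map_mul, Units.inv_mul, map_one, one_mul]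
      _ = algebraMap R S ↑v⁻¹ * aeval s (reflect d p.divX) := by
          rw [← huw, hrefl']
          linear_combination (algebraMap R S ↑v⁻¹ * aeval u p.divX * s ^ d) * hsu
      _ = aeval s (C (↑v⁻¹ : R) * reflect d p.divX) := by rw [map_mul, aeval_C]
  have hdeg : (C (↑v⁻¹ : R) * reflect d p.divX).natDegree ≤ d :=
    (natDegree_C_mul_le _ _).trans (natDegree_reflect_le.trans (max_self d).le)
  refine ⟨X ^ (d + 1) - C (↑v⁻¹ : R) * reflect d p.divX,
    monic_X_pow_sub ((degree_le_of_natDegree_le hdeg).trans_lt ?_), ?_⟩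
  · exact_mod_cast Nat.lt_succ_self d
  · rw [← aeval_def, map_sub, map_pow, aeval_X, hpow, sub_self]

theorem subsingleton_of_isIntegral_of_aeval_eq_one {s : S} (hs : IsIntegral R s)
    (hp : p ∈ (maximalIdeal R).map C) (h : aeval s p = 1) : Subsingleton S := by
  let T := Algebra.adjoin R {s}
  have : Module.Finite R T := .of_fg hs.fg_adjoin_singleton
  have hmap : (maximalIdeal R).map (algebraMap R T) = ⊤ := by
    have := Ideal.mem_map_of_mem
      (aeval (R := R) (⟨s, Algebra.self_mem_adjoin_singleton R s⟩ : T) : R[X] →+* T) hp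
    rw [Ideal.map_map, ← algebraMap_eq, AlgHom.comp_algebraMap] at this
    rw [Ideal.eq_top_iff_one]
    convert this
    exact Subtype.ext (by simp [aeval_subalgebra_coe, h])
  have hT := Submodule.eq_bot_of_le_smul_of_le_jacobson_bot (maximalIdeal R) ⊤
    Module.Finite.fg_top (by rw [Ideal.smul_top_eq_map (S := T), hmap]; rfl)
    (jacobson_eq_maximalIdeal ⊥ bot_ne_top).ge
  have h1 : (1 : T) = 0 := (Submodule.mem_bot R).1 (hT ▸ Submodule.mem_top)
  exact subsingleton_of_zero_eq_one (congrArg Subtype.val h1).symm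

end IsLocalRing

theorem Subring.condIdeal_le_maximalIdeal {S : Type*} [CommRing S] (R : Subring S) [IsLocalRing R]
    {s : S} (hs : s ∉ R) : R.condIdeal s ≤ maximalIdeal R :=
  le_maximalIdeal fun h ↦ hs <| by
    have h1 : ((1 : R) : S) * s ∈ R := show (1 : R) ∈ R.condIdeal s from h ▸ Submodule.mem_top
    simpa using h1

theorem Subring.isPrufer_of_forall_inv_mem {S : Type*} [CommRing S] (R : Subring S)
    (h : ∀ s : S, s ∉ R → ∃ t : S, t ∈ R ∧ s * t = 1) : R.subtype.IsPrufer := by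
  intro T hT
  let := (R.subtype.codRestrict T fun a ↦ hT ⟨a, rfl⟩).toAlgebra
  refine .of_isLocalization _ (IsLocalization.of_forall_mem_range_or_mul_eq_one
    (fun a b hab ↦ Subtype.ext (congrArg Subtype.val hab :)) fun t ↦ ?_)
  by_cases ht : (t : S) ∈ R
  · exact .inl ⟨⟨t, ht⟩, rfl⟩
  · obtain ⟨r, hr, htr⟩ := h t ht
    exact .inr ⟨⟨r, hr⟩, Subtype.ext (by rw [mul_comm]; exact htr)⟩

theorem Subring.exists_aeval_eq_one_of_isPrufer_s11 {S : Type u} [CommRing S] (R : Subring S)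
    [IsLocalRing R] (hP : R.subtype.IsPrufer) {s : S} (hs : s ∉ R) :
    ∃ p ∈ (maximalIdeal R).map C, aeval s p = 1 := by
  set T := (aeval (R := R) s).range
  have hT : R.subtype.range ≤ T.toSubring := by
    rintro _ ⟨r, rfl⟩
    exact ⟨C r, aeval_C s r⟩
  have hf : (R.subtype.codRestrict T.toSubring fun r ↦ hT ⟨r, rfl⟩) =
      (aeval s).rangeRestrict.toRingHom.comp C := by
    ext r
    exact (aeval_C s r).symm
  have hmap := (hP _ hT).map_eq_top (J := maximalIdeal R) ⟨s, X, aeval_X s⟩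
    fun r ⟨r', hr'⟩ ↦ R.condIdeal_le_maximalIdeal hs <| by
      have h : (r' : S) = r * s := congrArg Subtype.val hr'
      exact show (r : S) * s ∈ R from h ▸ r'.2
  rw [hf, ← Ideal.map_map, Ideal.eq_top_iff_one] at hmap
  obtain ⟨p, hp, hp1⟩ :=
    (Ideal.mem_map_iff_of_surjective _ (aeval s).rangeRestrict_surjective).1 hmap
  exact ⟨p, hp, congrArg Subtype.val hp1⟩

theorem Subring.exists_inv_mem_of_isPrufer {S : Type u} [CommRing S] (R : Subring S)
    [IsLocalRing R] (hP : R.subtype.IsPrufer) {s : S} (hs : s ∉ R) : ∃ t ∈ R, s * t = 1 := by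
  obtain ⟨p, hp, hps⟩ := R.exists_aeval_eq_one_of_isPrufer_s11 hP hs
  have hp0 : p.coeff 0 ∈ maximalIdeal R := Ideal.mem_map_C_iff.1 hp 0
  obtain ⟨u, hsu⟩ := (isUnit_of_aeval_eq_one hp0 hps).exists_right_inv
  by_cases hu : u ∈ R
  · exact ⟨u, hu, hsu⟩
  obtain ⟨q, hq, hqu⟩ := R.exists_aeval_eq_one_of_isPrufer_s11 hP hu
  have hint := isIntegral_of_mul_eq_one_of_aeval_eq_one hsu (Ideal.mem_map_C_iff.1 hq 0) hqu
  have := subsingleton_of_isIntegral_of_aeval_eq_one hint hp hps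
  exact (hs (Subsingleton.elim s 0 ▸ R.zero_mem)).elim

/-- Let `R ⊆ S` with `R` local.  Then `R ⊆ S` is Prüfer iff every
`s ∈ S \ R` is invertible in `S` with inverse lying in `R`. -/
theorem prufer_iff_inv_mem_of_local {S : Type*} [CommRing S] (R : Subring S)
    [IsLocalRing R] :
    R.subtype.IsPrufer ↔ ∀ s : S, s ∉ R → ∃ t : S, t ∈ R ∧ s * t = 1 :=
  ⟨fun hP _ hs ↦ R.exists_inv_mem_of_isPrufer hP hs, R.isPrufer_of_forall_inv_mem⟩
end

section
/- Let R ⊆ S be an extension of commutative rings such that S is of finite type as an R-algebra and S is a localization of R at a multiplicatively closed subset Σ of R (i.e., the inclusion R → S satisfies the universal property of localization at Σ). Then there exists x ∈ Σ such that S is the localization of R away from x, i.e., S = R_x. -/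
/-!
A single `x ∈ Σ` clears the denominators of a finite set of algebra generators of `S`. The
fractions `a / x ^ n` form an `R`-subalgebra, so it is all of `S`; as `R → S` is injective,
this makes `S` the localization `R_x`.
-/

namespace IsLocalization

section CommSemiring

variable (R : Type*) {S : Type*} [CommSemiring R] [CommSemiring S] [Algebra R S]

/-- The elements of `S` of the form `a / x ^ n` with `a ∈ R`. -/
def awaySubalgebra (x : R) : Subalgebra R S where
  carrier := {z | ∃ n : ℕ, IsInteger R (x ^ n • z)}
  add_mem' := by
    rintro z w ⟨n, hz⟩ ⟨m, hw⟩
    refine ⟨n + m, ?_⟩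
    have : x ^ (n + m) • (z + w) = x ^ m • x ^ n • z + x ^ n • x ^ m • w := by
      simp only [smul_add, smul_smul, ← pow_add, add_comm]
    rw [this]
    exact isInteger_add (isInteger_smul hz) (isInteger_smul hw)
  mul_mem' := by
    rintro z w ⟨n, hz⟩ ⟨m, hw⟩
    refine ⟨n + m, ?_⟩
    rw [pow_add, mul_smul_mul_comm]
    exact isInteger_mul hz hw
  algebraMap_mem' a := ⟨0, by simpa using ⟨a, rfl⟩⟩

variable {R}

theorem mem_awaySubalgebra_of_isInteger_smul {x : R} {z : S} (h : IsInteger R (x • z)) :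
    z ∈ awaySubalgebra R x :=
  ⟨1, by rwa [pow_one]⟩

theorem Away.of_awaySubalgebra_eq_top {x : R} (hx : IsUnit (algebraMap R S x))
    (hinj : Function.Injective (algebraMap R S)) (htop : awaySubalgebra R x = (⊤ : Subalgebra R S)) :
    IsLocalization.Away x S where
  map_units := by
    rintro ⟨_, n, rfl⟩
    simpa using hx.pow n
  surj z := by
    obtain ⟨n, a, ha⟩ := (htop ▸ Algebra.mem_top : z ∈ awaySubalgebra R x)
    exact ⟨⟨a, ⟨x ^ n, n, rfl⟩⟩, by rw [ha, Algebra.smul_def, mul_comm]⟩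
  exists_of_eq h := ⟨1, by rw [hinj h]⟩

end CommSemiring

theorem exists_mem_awaySubalgebra_eq_top {R S : Type*} [CommSemiring R] [CommSemiring S]
    [Algebra R S] (M : Submonoid R) [IsLocalization M S] [Algebra.FiniteType R S] :
    ∃ x ∈ M, awaySubalgebra R x = (⊤ : Subalgebra R S) := by
  obtain ⟨t, ht⟩ := Algebra.FiniteType.out (R := R) (A := S)
  obtain ⟨⟨x, hxM⟩, hx⟩ := exist_integer_multiples_of_finset M t
  refine ⟨x, hxM, top_le_iff.mp ?_⟩
  rw [← ht, Algebra.adjoin_le_iff]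
  exact fun s hs => mem_awaySubalgebra_of_isInteger_smul (hx s hs)

end IsLocalization

/-- If `R ⊆ S` is an extension of commutative rings such that `S` is of
finite type as an `R`-algebra and `S` is a localization of `R` at a multiplicatively closed
subset `Σ` of `R`, then `S = R_x` for some `x ∈ Σ`. -/
theorem exists_away_of_finiteType_localization {S : Type*} [CommRing S] (R : Subring S)
    (M : Submonoid R) [IsLocalization M S] [Algebra.FiniteType R S] :
    ∃ x : R, x ∈ M ∧ IsLocalization.Away x S := by
  obtain ⟨x, hxM, htop⟩ := IsLocalization.exists_mem_awaySubalgebra_eq_top (S := S) M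
  exact ⟨x, hxM, .of_awaySubalgebra_eq_top (IsLocalization.map_units S ⟨x, hxM⟩)
    Subtype.val_injective htop⟩
end

section
/- Let R be a local commutative ring and R ⊆ S an extension of finite type (S is a finitely generated R-algebra). Then R ⊆ S is a Prüfer extension if and only if there exists a strong divisor s of R such that S is the localization of R away from s (i.e., the inclusion R → S satisfies the universal property of inverting the powers of s). -/
/-!
Both sides are equivalent to: every `x ∈ S \ R` has an inverse in `R`. Given this, each
intermediate ring `T` is the localization of `R` at the elements that become units in `T`, so
`R ⊆ S` is Prüfer; and when `S` is generated by finitely many `g`, the product `s` of the inverses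
of those `g ∉ R` is a strong divisor with `S = R_s` (a `t ∈ R` invertible in `S` is a strong
divisor, as for `a ∈ R` either `a / t ∈ R` or `t / a ∈ R`). Conversely, for `S = R_s` with `s` a strong
divisor, write `z = r / s ^ n`: if `s ∣ r` the exponent drops, and if `r ∣ s` then `z⁻¹ ∈ R`.
-/

universe u v

open TensorProduct Polynomial IsLocalRing

theorem isStrongDivisor_iff_dvd_or_dvd {A : Type*} [CommRing A] {t : A} :
    IsStrongDivisor t ↔ t ∈ nonZeroDivisors A ∧ ∀ a : A, t ∣ a ∨ a ∣ t := by
  refine and_congr_right fun _ => ⟨fun h a => ?_, fun h I => or_iff_not_imp_left.mpr fun hI => ?_⟩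
  · simp_rw [← Ideal.mem_span_singleton, ← Ideal.span_singleton_le_iff_mem]
    exact h (Ideal.span {a})
  · obtain ⟨a, haI, hat⟩ := SetLike.not_le_iff_exists.mp hI
    obtain ⟨c, rfl⟩ := (h a).resolve_left (Ideal.mem_span_singleton.not.mp hat)
    exact (Ideal.span_singleton_le_iff_mem I).mpr (I.mul_mem_right c haI)

namespace Algebra.IsEpi

variable {A B : Type*} [CommRing A] [CommRing B] [Algebra A B] [Algebra.IsEpi A B]

theorem tmul_eq_one_tmul_mul (b c : B) : b ⊗ₜ[A] c = 1 ⊗ₜ (b * c) := by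
  rw [← one_mul b, ← mul_one c, ← Algebra.TensorProduct.tmul_mul_tmul,
    ← (Algebra.isEpi_iff_forall_one_tmul_eq A B).mp inferInstance b]
  simp [mul_comm]

theorem subsingleton_quotient_one_tensor :
    Subsingleton ((B ⧸ (1 : Submodule A B)) ⊗[A] B) := by
  refine subsingleton_of_forall_eq 0 fun z => ?_
  induction z using TensorProduct.induction_on with
  | zero => rfl
  | add x y hx hy => rw [hx, hy, add_zero]
  | tmul q c =>
    obtain ⟨b, rfl⟩ := Submodule.mkQ_surjective _ q
    have h1 : (1 : Submodule A B).mkQ 1 = 0 :=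
      (Submodule.Quotient.mk_eq_zero _).mpr (Submodule.one_le.mp le_rfl)
    rw [← LinearMap.rTensor_tmul, tmul_eq_one_tmul_mul, LinearMap.rTensor_tmul, h1, zero_tmul]

variable [Module.Flat A B]

/-- Tensoring the embedding `A ⧸ (A :_A b) ↪ B ⧸ A`, `1 ↦ b`, with the flat `A`-module `B` lands in
`(B ⧸ A) ⊗[A] B = 0`. -/
theorem map_colon_eq_top_s13 (b : B) :
    ((1 : Submodule A B).colon {b}).map (algebraMap A B) = ⊤ := by
  set φ := (1 : Submodule A B).mkQ ∘ₗ LinearMap.toSpanSingleton A B b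
  have hker : LinearMap.ker φ = (1 : Submodule A B).colon {b} := by
    ext a
    simp [φ, ← Submodule.Quotient.mk_smul, Submodule.mem_one]
  have hinj : Function.Injective ((LinearMap.ker φ).liftQ φ le_rfl) := by
    rw [← LinearMap.ker_eq_bot, Submodule.ker_liftQ_eq_bot _ _ _ le_rfl]
  have := subsingleton_quotient_one_tensor (A := A) (B := B)
  have : Subsingleton ((A ⧸ LinearMap.ker φ) ⊗[A] B) :=
    (Module.Flat.rTensor_preserves_injective_linearMap _ hinj).subsingleton
  have : Subsingleton (B ⧸ LinearMap.ker φ • (⊤ : Submodule A B)) :=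
    (quotTensorEquivQuotSMul B _).symm.injective.subsingleton
  rw [← hker, ← Submodule.restrictScalars_eq_top_iff A, ← Ideal.smul_top_eq_map]
  exact Submodule.Quotient.subsingleton_iff.mp this

theorem map_maximalIdeal_eq_top [IsLocalRing A] (h : ¬Function.Surjective (algebraMap A B)) :
    (maximalIdeal A).map (algebraMap A B) = ⊤ := by
  obtain ⟨b, hb⟩ := not_forall.mp h
  refine eq_top_mono (Ideal.map_mono fun a ha => ?_) (map_colon_eq_top_s13 b)
  rintro ⟨u, rfl⟩
  obtain ⟨c, hc⟩ := Submodule.mem_one.mp (Submodule.mem_colon_singleton.mp ha)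
  exact hb ⟨↑u⁻¹ * c, by rw [map_mul, hc, ← Algebra.smul_def, smul_smul, u.inv_mul, one_smul]⟩

end Algebra.IsEpi

theorem exists_coeff_mem_aeval_eq_one_of_map_eq_top {R S : Type*} [CommRing R] [CommRing S]
    [Algebra R S] {I : Ideal R} {x : S} (h : I.map (algebraMap R (Algebra.adjoin R {x})) = ⊤) :
    ∃ p : R[X], (∀ n, p.coeff n ∈ I) ∧ aeval x p = 1 := by
  have hsurj : Function.Surjective (aeval (R := R) (⟨x, Algebra.self_mem_adjoin_singleton R x⟩ :
      Algebra.adjoin R {x})) := by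
    rintro ⟨y, hy⟩
    obtain ⟨p, rfl⟩ := (Algebra.adjoin_singleton_eq_range_aeval R x ▸ hy : y ∈ (aeval x).range)
    exact ⟨p, Subtype.ext (aeval_subalgebra_coe p _ _)⟩
  rw [← (aeval _).comp_algebraMap, ← Ideal.map_map, algebraMap_eq] at h
  obtain ⟨p, hp, hp1⟩ :=
    (Ideal.mem_map_iff_of_surjective _ hsurj).mp (h ▸ Submodule.mem_top (x := 1))
  exact ⟨p, Ideal.mem_map_C_iff.mp hp,
    (aeval_subalgebra_coe p _ _).symm.trans (congrArg Subtype.val hp1)⟩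

/-- `x` is a unit because `x * (p - 1).divX(x) = 1 - p.coeff 0`; its inverse is a root of the
reverse of `p - 1`, whose leading coefficient `p.coeff 0 - 1` is a unit. -/
theorem exists_mul_eq_one_isIntegral_of_aeval_eq_one {R S : Type*} [CommRing R] [IsLocalRing R]
    [CommRing S] [Algebra R S] {p : R[X]} (hp : ∀ n, p.coeff n ∈ maximalIdeal R) {x : S}
    (hx : aeval x p = 1) : ∃ w : S, x * w = 1 ∧ IsIntegral R w := by
  set q := p - 1
  have hq : aeval x q = 0 := by simp [q, hx]
  have hq0 : IsUnit (q.coeff 0) := by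
    simpa [q] using (isUnit_one_sub_self_of_mem_nonunits _ (hp 0)).neg
  have hxq : x * aeval x q.divX + algebraMap R S (q.coeff 0) = 0 := by
    have h := congrArg (aeval x) q.divX_mul_X_add
    rw [map_add, map_mul, aeval_X, aeval_C, hq] at h
    linear_combination h
  have hxunit : IsUnit x :=
    isUnit_of_mul_isUnit_left (eq_neg_of_add_eq_zero_left hxq ▸ (hq0.map _).neg)
  let := hxunit.invertible
  have hrev : aeval (⅟x) q.reverse = 0 := (eval₂_reverse_eq_zero_iff _ _ _).mpr hq
  have hlead : IsUnit q.reverse.leadingCoeff := by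
    rwa [reverse_leadingCoeff, trailingCoeff, natTrailingDegree_eq_zero.mpr (Or.inr hq0.ne_zero)]
  exact ⟨⅟x, mul_invOf_self x, _, monic_of_isUnit_leadingCoeff_inv_smul hlead,
    by rw [← aeval_def, Units.smul_def, map_smul, hrev, smul_zero]⟩

namespace Subring

variable {S : Type*} [CommRing S] (R : Subring S)

def MemOrInvMem : Prop :=
  ∀ x : S, x ∈ R ∨ ∃ t : R, (t : S) * x = 1

variable {R}

theorem isLocalizationAway_of_adjoin_eq_top {s : R} (hs : IsUnit (s : S)) {G : Set S}
    (hG : Algebra.adjoin R G = ⊤) (hGs : ∀ g ∈ G, g * s ∈ R) : IsLocalization.Away s S := by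
  have hden (z : S) : ∃ n : ℕ, z * (s : S) ^ n ∈ R := by
    induction (hG ▸ Algebra.mem_top : z ∈ Algebra.adjoin R G) using Algebra.adjoin_induction with
    | mem g hg => exact ⟨1, by simpa using hGs g hg⟩
    | algebraMap r => exact ⟨0, by simp [Algebra.algebraMap_ofSubsemiring_apply]⟩
    | add x y _ _ hx hy =>
      obtain ⟨n, hn⟩ := hx
      obtain ⟨m, hm⟩ := hy
      refine ⟨n + m, ?_⟩
      rw [add_mul, pow_add, ← mul_assoc, mul_comm ((s : S) ^ n), ← mul_assoc]
      exact R.add_mem (R.mul_mem hn (R.pow_mem s.2 m)) (R.mul_mem hm (R.pow_mem s.2 n))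
    | mul x y _ _ hx hy =>
      obtain ⟨n, hn⟩ := hx
      obtain ⟨m, hm⟩ := hy
      exact ⟨n + m, by rw [pow_add, mul_mul_mul_comm]; exact R.mul_mem hn hm⟩
  refine ⟨⟨?_, fun z => ?_, fun h => ⟨1, by rw [Subtype.ext h]⟩⟩⟩
  · rintro ⟨_, n, rfl⟩
    simpa [Algebra.algebraMap_ofSubsemiring_apply] using hs.pow n
  · obtain ⟨n, hn⟩ := hden z
    exact ⟨(⟨_, hn⟩, ⟨s ^ n, n, rfl⟩), by simp [Algebra.algebraMap_ofSubsemiring_apply]⟩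

namespace MemOrInvMem

theorem isStrongDivisor (hR : R.MemOrInvMem) {t : R} (ht : IsUnit (t : S)) :
    IsStrongDivisor t := by
  obtain ⟨x, htx⟩ := ht.exists_right_inv
  refine isStrongDivisor_iff_dvd_or_dvd.mpr
    ⟨mem_nonZeroDivisors_iff_right.mpr fun r hr => Subtype.ext ?_, fun a => ?_⟩
  · have hr' : (r : S) * t = 0 := by exact_mod_cast congrArg Subtype.val hr
    simpa [mul_assoc, htx] using congrArg (· * x) hr'
  rcases hR ((a : S) * x) with h | ⟨t', ht'⟩
  · refine Or.inl ⟨⟨_, h⟩, Subtype.ext ?_⟩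
    rw [Subring.coe_mul, mul_left_comm, htx, mul_one]
  · refine Or.inr ⟨t', Subtype.ext ?_⟩
    rw [Subring.coe_mul]
    linear_combination (-(t : S)) * ht' + ((a : S) * t') * htx

theorem exists_isStrongDivisor_isLocalizationAway (hR : R.MemOrInvMem) [Algebra.FiniteType R S] :
    ∃ s : R, IsStrongDivisor s ∧ IsLocalization.Away s S := by
  have hmul (x : S) : ∃ t : R, IsUnit (t : S) ∧ x * t ∈ R := by
    rcases hR x with h | ⟨t, ht⟩
    · exact ⟨1, by simpa using h⟩
    · exact ⟨t, IsUnit.of_mul_eq_one _ ht, by rw [mul_comm, ht]; exact R.one_mem⟩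
  choose t ht using hmul
  obtain ⟨G, hG⟩ := Algebra.FiniteType.out (R := R) (A := S)
  have hs : IsUnit ((∏ g ∈ G, t g : R) : S) := by
    rw [SubmonoidClass.coe_finsetProd]
    exact IsUnit.prod_iff.mpr fun g _ => (ht g).1
  refine ⟨∏ g ∈ G, t g, hR.isStrongDivisor hs, isLocalizationAway_of_adjoin_eq_top hs hG ?_⟩
  classical
  intro g hg
  rw [← Finset.mul_prod_erase G t hg, Subring.coe_mul, ← mul_assoc]
  exact R.mul_mem (ht g).2 (Subtype.mem _)

theorem isPrufer (hR : R.MemOrInvMem) : R.subtype.IsPrufer := by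
  intro T hT
  set f := R.subtype.codRestrict T fun a => hT (R.subtype.mem_range_self a)
  let := f.toAlgebra
  let W := (IsUnit.submonoid T).comap f
  have : IsLocalization W T := by
    refine ⟨⟨fun w => w.2, fun z => ?_, fun {x y} h => ⟨1, ?_⟩⟩⟩
    · rcases hR z with h | ⟨t, ht⟩
      · refine ⟨(⟨z, h⟩, 1), Subtype.ext ?_⟩
        change (z : S) * ((1 : R) : S) = z
        rw [OneMemClass.coe_one, mul_one]
      · refine ⟨(1, ⟨t, IsUnit.of_mul_eq_one z (Subtype.ext ht)⟩), Subtype.ext ?_⟩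
        change (z : S) * t = 1
        rw [mul_comm, ht]
    · have hxy : (x : S) = y := congrArg (Subtype.val : T → S) h
      rw [Subtype.ext hxy]
  exact ⟨IsLocalization.flat T W, fun _ _ _ _ hgh => IsLocalization.ringHom_ext W hgh⟩

end MemOrInvMem

theorem memOrInvMem_of_isLocalizationAway {s : R} (hs : IsStrongDivisor s)
    [IsLocalization.Away s S] : R.MemOrInvMem := by
  have hsu : IsUnit (s : S) := IsLocalization.Away.algebraMap_isUnit s
  intro z
  obtain ⟨⟨r, _, n, rfl⟩, h⟩ := IsLocalization.surj (Submonoid.powers s) z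
  replace h : z * (s : S) ^ n = r := by simpa [Algebra.algebraMap_ofSubsemiring_apply] using h
  induction n generalizing r with
  | zero => exact Or.inl (by simpa [← h] using r.2)
  | succ n ih =>
    rcases (isStrongDivisor_iff_dvd_or_dvd.mp hs).2 r with ⟨a, rfl⟩ | ⟨a, ha⟩
    · refine ih a (hsu.mul_right_cancel ?_)
      push_cast at h
      linear_combination h
    · refine Or.inr ⟨s ^ n * a, hsu.mul_right_cancel ?_⟩
      have ha' : (s : S) = r * a := by exact_mod_cast congrArg Subtype.val ha
      push_cast
      linear_combination (a : S) * h - ha'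

end Subring

namespace RingHom.IsPrufer

variable {S : Type*} [CommRing S] {R : Subring S}

theorem flat_and_isEpi (hP : R.subtype.IsPrufer) (T : Subalgebra R S) :
    Module.Flat R T ∧ Algebra.IsEpi R T := by
  obtain ⟨hflat, hepi⟩ := hP T.toSubring (by rintro _ ⟨r, rfl⟩; exact T.algebraMap_mem r)
  refine ⟨hflat, (Algebra.isEpi_iff_forall_one_tmul_eq R T).mpr fun t => ?_⟩
  have := hepi (C := T ⊗[R] T)
    (Algebra.TensorProduct.includeLeftRingHom (R := R) (A := T) (B := T))
    (Algebra.TensorProduct.includeRight (R := R) (A := T) (B := T)).toRingHom (by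
      ext r
      change algebraMap R T r ⊗ₜ[R] (1 : T) = 1 ⊗ₜ algebraMap R T r
      rw [Algebra.algebraMap_eq_smul_one, smul_tmul])
  exact (RingHom.congr_fun this t).symm

/-- For `x ∉ R`, flatness and epi-ness of `R → R[x]` give `1 = p(x)` with all coefficients of `p`
in the maximal ideal, so `x` is invertible with an inverse `w` integral over `R`; then `R → R[w]`
is a finite epimorphism, hence surjective, i.e. `w ∈ R`. -/
theorem memOrInvMem [IsLocalRing R] (hP : R.subtype.IsPrufer) : R.MemOrInvMem := by
  intro x
  refine or_iff_not_imp_left.mpr fun hx => ?_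
  obtain ⟨_, _⟩ := hP.flat_and_isEpi (Algebra.adjoin R {x})
  have hm := Algebra.IsEpi.map_maximalIdeal_eq_top (A := R) (B := Algebra.adjoin R {x})
    fun h => hx <| by
      obtain ⟨r, hr⟩ := h ⟨x, Algebra.self_mem_adjoin_singleton R x⟩
      have hrx : (r : S) = x := congrArg Subtype.val hr
      exact hrx ▸ r.2
  obtain ⟨p, hpm, hp1⟩ := exists_coeff_mem_aeval_eq_one_of_map_eq_top hm
  obtain ⟨w, hxw, hw⟩ := exists_mul_eq_one_isIntegral_of_aeval_eq_one hpm hp1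
  obtain ⟨-, _⟩ := hP.flat_and_isEpi (Algebra.adjoin R {w})
  have := Algebra.finite_adjoin_simple_of_isIntegral hw
  obtain ⟨t, ht⟩ := (Algebra.isEpi_iff_surjective_algebraMap_of_finite (R := R)
    (A := Algebra.adjoin R {w})).mp ‹_› ⟨w, Algebra.self_mem_adjoin_singleton R w⟩
  have htw : (t : S) = w := congrArg Subtype.val ht
  exact ⟨t, by rw [htw, mul_comm, hxw]⟩

end RingHom.IsPrufer

/-- Let `R` be local and `R ⊆ S` an extension of finite type.  Then
`R ⊆ S` is Prüfer iff `S = R_s` for some strong divisor `s` of `R`. -/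
theorem prufer_iff_away_strong_divisor {S : Type*} [CommRing S] (R : Subring S)
    [IsLocalRing R] [Algebra.FiniteType R S] :
    R.subtype.IsPrufer ↔ ∃ s : R, IsStrongDivisor s ∧ IsLocalization.Away s S :=
  ⟨fun hP => hP.memOrInvMem.exists_isStrongDivisor_isLocalizationAway,
    fun ⟨_, hs, _⟩ => (Subring.memOrInvMem_of_isLocalizationAway hs).isPrufer⟩
end

section
/- Let R be a local commutative ring and x ∈ R a non-zero-divisor. Then x is a strong divisor of R if and only if the extension R ⊆ R_x is Prüfer, where R_x is the localization of R away from x (into which R embeds since x is regular). -/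
universe u v

/-!
Both sides are equivalent to: every element of `R_x` either lies in `R` or is a unit whose inverse
lies in `R`.

Writing `z = r / x ^ n` and comparing `r` with `x` shows that a strong divisor has this property:
either `x ∣ r` and `n` drops, or `r ∣ x` and `z` is inverted by an element of `R`. An injective
extension with this property is a localization of each intermediate ring `T` (at the elements of
`R` that become units in `T`), hence Prüfer.

Conversely, let `R ⊆ S` be Prüfer with `R` local and `s ∉ R`. The conductor `(R :_R s)` lies in the
maximal ideal `m`, and because `R → R[s]` is a flat epimorphism it generates `R[s]`, so `1 = q(s)`
with all coefficients of `q` in `m`. The constant term of `1 - q` is then a unit, which makes `s`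
a unit whose inverse is integral over `R`. A finite epimorphism is surjective, so a Prüfer
extension is integrally closed, and the inverse of `s` lies in `R`.
-/

open TensorProduct Polynomial

section

variable {R : Type u} {S : Type v} [CommRing R] [CommRing S] [Algebra R S]

theorem RingHom.toAlgebra_algebraMap : (algebraMap R S).toAlgebra = ‹Algebra R S› :=
  Algebra.algebra_ext _ _ fun _ => rfl

theorem RingHom.IsFlatEpi.flat (h : (algebraMap R S).IsFlatEpi) : Module.Flat R S := by
  have h₁ := h.1
  rwa [RingHom.toAlgebra_algebraMap] at h₁

theorem RingHom.IsFlatEpi.isEpi_s14 (h : (algebraMap R S).IsFlatEpi) : Algebra.IsEpi R S := by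
  refine (Algebra.isEpi_iff_forall_one_tmul_eq R S).mpr fun b => ?_
  -- `IsFlatEpi` only tests against rings in `Type (max u v)`.
  let up : S ⊗[R] S →+* ULift.{max u v} (S ⊗[R] S) := ULift.ringEquiv.symm.toRingHom
  have hcomp : (up.comp (Algebra.TensorProduct.includeRight (R := R) (A := S)).toRingHom).comp
      (algebraMap R S) =
      (up.comp (Algebra.TensorProduct.includeLeftRingHom (R := R) (A := S) (B := S))).comp
        (algebraMap R S) := by
    ext a
    exact (Algebra.TensorProduct.tmul_one_eq_one_tmul (A := S) (B := S) a).symm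
  exact congrArg ULift.down (RingHom.congr_fun (h.2 _ _ hcomp) b)

theorem IsLocalization.isFlatEpi_algebraMap (M : Submonoid R) [IsLocalization M S] :
    (algebraMap R S).IsFlatEpi := by
  refine ⟨?_, fun _ _ _ _ h => IsLocalization.ringHom_ext M h⟩
  rw [RingHom.toAlgebra_algebraMap]
  exact IsLocalization.flat S M

/-- The conductor `I = (R :_R t)` is the kernel of `R → S ⧸ R, r ↦ r t`. Tensoring the induced
injection `R ⧸ I → S ⧸ R` with the flat module `S` keeps it injective, and it kills `1 ⊗ a`
because `t ⊗ 1 = 1 ⊗ t`; hence `a ∈ I S`. -/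
theorem Algebra.IsEpi.map_colon_one_eq_top [Module.Flat R S] [Algebra.IsEpi R S] (t : S) :
    ((1 : Submodule R S).colon {t}).map (algebraMap R S) = ⊤ := by
  set I := (1 : Submodule R S).colon {t}
  let g : R →ₗ[R] S ⧸ (1 : Submodule R S) :=
    (1 : Submodule R S).mkQ ∘ₗ LinearMap.toSpanSingleton R S t
  have hker : LinearMap.ker g = I := by
    ext r
    simp only [g, I, LinearMap.mem_ker, LinearMap.comp_apply, LinearMap.toSpanSingleton_apply,
      Submodule.mkQ_apply, Submodule.Quotient.mk_eq_zero, Submodule.mem_colon_singleton]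
  let φ := I.liftQ g hker.ge
  have hφ : Function.Injective (φ.rTensor S) :=
    Module.Flat.rTensor_preserves_injective_linearMap φ <| by
      rw [← LinearMap.ker_eq_bot]
      exact Submodule.ker_liftQ_eq_bot _ _ _ hker.le
  have hmkQ : (1 : Submodule R S).mkQ 1 = 0 :=
    (Submodule.Quotient.mk_eq_zero _).mpr (Submodule.one_le.mp le_rfl)
  rw [← Submodule.restrictScalars_eq_top_iff R, ← Ideal.smul_top_eq_map]
  refine Submodule.eq_top_iff'.mpr fun a => ?_
  have hga : φ.rTensor S (Submodule.Quotient.mk 1 ⊗ₜ a) = 0 := by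
    have := congrArg (_root_.TensorProduct.map (1 : Submodule R S).mkQ (LinearMap.mulLeft R a))
      ((Algebra.isEpi_iff_forall_one_tmul_eq R S).mp inferInstance t)
    rw [LinearMap.rTensor_tmul, Submodule.liftQ_apply]
    simpa [g, hmkQ] using this.symm
  have h0 : (Submodule.Quotient.mk 1 ⊗ₜ[R] a : (R ⧸ I) ⊗[R] S) = 0 := hφ (by rw [hga, map_zero])
  simpa using congrArg (TensorProduct.quotTensorEquivQuotSMul S I) h0

/-- The inverse of `s` is a root of the reversed polynomial, whose leading coefficient
`p.coeff 0` is a unit. -/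
theorem Polynomial.exists_mul_eq_one_isIntegral_of_aeval_eq_zero {s : S} {p : R[X]}
    (hp : aeval s p = 0) (hu : IsUnit (p.coeff 0)) : ∃ v : S, s * v = 1 ∧ IsIntegral R v := by
  obtain ⟨u, hu⟩ := hu
  set v := -algebraMap R S ↑u⁻¹ * aeval s p.divX
  have hsv : s * v = 1 := by
    have hsplit := congrArg (aeval s) (X_mul_divX_add p)
    rw [map_add, map_mul, aeval_X, aeval_C, hp, ← hu] at hsplit
    calc s * v = -algebraMap R S ↑u⁻¹ * (s * aeval s p.divX) := by ring
      _ = algebraMap R S ↑u⁻¹ * algebraMap R S ↑u := by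
        rw [eq_neg_of_add_eq_zero_left hsplit]; ring
      _ = 1 := by rw [← map_mul, Units.inv_mul, map_one]
  refine ⟨v, hsv, C ↑u⁻¹ * p.reverse,
    monic_of_natDegree_le_of_coeff_eq_one p.natDegree
      (natDegree_C_mul_le _ _ |>.trans p.reverse_natDegree_le) ?_, ?_⟩
  · rw [coeff_C_mul, coeff_reverse, revAt_le le_rfl, Nat.sub_self, ← hu, Units.inv_mul]
  · let := invertibleOfRightInverse s v hsv
    rw [eval₂_mul, ← invOf_eq_right_inv hsv,
      (eval₂_reverse_eq_zero_iff (algebraMap R S) s p).mpr hp, mul_zero]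

theorem RingHom.IsPrufer.isFlatEpi_subalgebra (h : (algebraMap R S).IsPrufer)
    (T : Subalgebra R S) : (algebraMap R T).IsFlatEpi :=
  h T.toSubring fun _ ⟨r, hr⟩ => hr ▸ T.algebraMap_mem r

theorem RingHom.IsPrufer.mem_range_of_isIntegral (h : (algebraMap R S).IsPrufer) {v : S}
    (hv : _root_.IsIntegral R v) : v ∈ (algebraMap R S).range := by
  have hepi := (h.isFlatEpi_subalgebra (Algebra.adjoin R {v})).isEpi_s14
  have := Algebra.finite_adjoin_simple_of_isIntegral hv
  obtain ⟨r, hr⟩ := Algebra.isEpi_iff_surjective_algebraMap_of_finite.mp hepi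
    ⟨v, Algebra.self_mem_adjoin_singleton R v⟩
  exact ⟨r, congrArg Subtype.val hr⟩

open IsLocalRing in
theorem RingHom.IsPrufer.exists_aeval_eq_one_of_notMem_range [IsLocalRing R]
    (h : (algebraMap R S).IsPrufer) {s : S} (hs : s ∉ (algebraMap R S).range) :
    ∃ q : R[X], (∀ n, q.coeff n ∈ maximalIdeal R) ∧ aeval s q = 1 := by
  let ev := (aeval (R := R) s).rangeRestrict
  have hT := h.isFlatEpi_subalgebra (aeval s).range
  have := hT.flat
  have := hT.isEpi_s14
  have hI : (1 : Submodule R (aeval s).range).colon {ev X} ≤ maximalIdeal R := by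
    intro r hr
    obtain ⟨y, hy⟩ := Submodule.mem_one.mp (Submodule.mem_colon_singleton.mp hr)
    rw [mem_maximalIdeal, mem_nonunits_iff]
    rintro ⟨r, rfl⟩
    refine hs ⟨↑r⁻¹ * y, ?_⟩
    have hy' : algebraMap R S y = (r : R) • s := by simpa [ev] using congrArg Subtype.val hy
    rw [map_mul, hy', Algebra.smul_def, ← mul_assoc, ← map_mul, Units.inv_mul, map_one, one_mul]
  have h1 : (1 : (aeval s).range) ∈ (maximalIdeal R).map (algebraMap R (aeval s).range) :=
    Ideal.map_mono hI (Algebra.IsEpi.map_colon_one_eq_top (R := R) (ev X) ▸ Submodule.mem_top)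
  have hcomp : algebraMap R (aeval s).range = ev.toRingHom.comp C := by
    ext r
    simp [ev]
  rw [hcomp, ← Ideal.map_map,
    Ideal.mem_map_iff_of_surjective ev.toRingHom (aeval s).rangeRestrict_surjective] at h1
  obtain ⟨q, hq, hq1⟩ := h1
  exact ⟨q, Ideal.mem_map_C_iff.mp hq, congrArg Subtype.val hq1⟩

def RingHom.MemRangeOrInvMemRange {A B : Type*} [CommRing A] [CommRing B] (f : A →+* B) : Prop :=
  ∀ b : B, b ∈ f.range ∨ ∃ a : A, b * f a = 1

theorem RingHom.IsPrufer.memRangeOrInvMemRange [IsLocalRing R] (h : (algebraMap R S).IsPrufer) :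
    (algebraMap R S).MemRangeOrInvMemRange := by
  intro s
  refine or_iff_not_imp_left.mpr fun hs => ?_
  obtain ⟨q, hqm, hq⟩ := h.exists_aeval_eq_one_of_notMem_range hs
  obtain ⟨v, hsv, hv⟩ := exists_mul_eq_one_isIntegral_of_aeval_eq_zero (s := s) (p := 1 - q)
    (by rw [map_sub, hq, map_one, sub_self])
    (by simpa using IsLocalRing.isUnit_one_sub_self_of_mem_nonunits _ (hqm 0))
  obtain ⟨t, rfl⟩ := h.mem_range_of_isIntegral hv
  exact ⟨t, hsv⟩

theorem RingHom.MemRangeOrInvMemRange.isLocalization (hinj : Function.Injective (algebraMap R S))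
    (h : (algebraMap R S).MemRangeOrInvMemRange) :
    IsLocalization ((IsUnit.submonoid S).comap (algebraMap R S)) S where
  map_units σ := σ.2
  surj z := by
    rcases h z with ⟨a, rfl⟩ | ⟨a, ha⟩
    · exact ⟨(a, 1), by simp⟩
    · exact ⟨(1, ⟨a, IsUnit.of_mul_eq_one_right _ ha⟩), by simpa using ha⟩
  exists_of_eq hab := ⟨1, by rw [hinj hab]⟩

theorem RingHom.IsPrufer.of_memRangeOrInvMemRange (hinj : Function.Injective (algebraMap R S))
    (h : (algebraMap R S).MemRangeOrInvMemRange) : (algebraMap R S).IsPrufer := by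
  intro T hT
  let := ((algebraMap R S).codRestrict T fun r => hT ⟨r, rfl⟩).toAlgebra
  have hT' : (algebraMap R T).MemRangeOrInvMemRange := fun z => by
    rcases h z with ⟨a, ha⟩ | ⟨a, ha⟩
    · exact .inl ⟨a, Subtype.ext ha⟩
    · exact .inr ⟨a, Subtype.ext ha⟩
  have := hT'.isLocalization fun a b hab => hinj (congrArg Subtype.val hab)
  exact IsLocalization.isFlatEpi_algebraMap ((IsUnit.submonoid T).comap (algebraMap R T))

theorem RingHom.isPrufer_iff_memRangeOrInvMemRange [IsLocalRing R]
    (hinj : Function.Injective (algebraMap R S)) :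
    (algebraMap R S).IsPrufer ↔ (algebraMap R S).MemRangeOrInvMemRange :=
  ⟨IsPrufer.memRangeOrInvMemRange, IsPrufer.of_memRangeOrInvMemRange hinj⟩

end

theorem Ideal.forall_le_span_singleton_or_span_singleton_le_iff {R : Type*} [CommRing R] {x : R} :
    (∀ I : Ideal R, I ≤ span {x} ∨ span {x} ≤ I) ↔ ∀ r : R, x ∣ r ∨ r ∣ x := by
  refine ⟨fun h r => by simpa only [span_singleton_le_span_singleton] using h (span {r}),
    fun h I => or_iff_not_imp_left.mpr fun hI => ?_⟩
  obtain ⟨r, hrI, hrx⟩ := SetLike.not_le_iff_exists.mp hI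
  rw [mem_span_singleton] at hrx
  exact (span_singleton_le_iff_mem I).mpr (I.mem_of_dvd ((h r).resolve_left hrx) hrI)

namespace IsLocalization.Away

variable {R S : Type*} [CommRing R] [CommRing S] [Algebra R S] (x : R) [IsLocalization.Away x S]

theorem memRangeOrInvMemRange_of_forall_dvd_or_dvd (h : ∀ r : R, x ∣ r ∨ r ∣ x) :
    (algebraMap R S).MemRangeOrInvMemRange := by
  have hx := IsLocalization.Away.algebraMap_isUnit (S := S) x
  intro z
  obtain ⟨n, r, hz⟩ := IsLocalization.Away.surj x z
  induction n generalizing r with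
  | zero => exact .inl ⟨r, by simpa using hz.symm⟩
  | succ n ih =>
    rcases h r with ⟨r', rfl⟩ | ⟨c, hc⟩
    · refine ih r' (hx.mul_left_cancel ?_)
      rw [map_mul] at hz
      linear_combination hz
    · refine .inr ⟨c * x ^ n, hx.mul_left_cancel ?_⟩
      rw [map_mul, map_pow]
      have hc' : algebraMap R S x = algebraMap R S r * algebraMap R S c := by rw [hc, map_mul]
      linear_combination algebraMap R S c * hz - hc'

theorem forall_dvd_or_dvd_of_memRangeOrInvMemRange (hinj : Function.Injective (algebraMap R S))
    (h : (algebraMap R S).MemRangeOrInvMemRange) (r : R) : x ∣ r ∨ r ∣ x := by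
  have hs := IsLocalization.mk'_spec S r ⟨x, Submonoid.mem_powers x⟩
  rcases h (IsLocalization.mk' S r ⟨x, Submonoid.mem_powers x⟩) with ⟨c, hc⟩ | ⟨t, ht⟩
  · refine .inl ⟨c, hinj ?_⟩
    rw [map_mul]
    linear_combination (-1 : S) * hs - algebraMap R S x * hc
  · refine .inr ⟨t, hinj ?_⟩
    rw [map_mul]
    linear_combination algebraMap R S t * hs - algebraMap R S x * ht

end IsLocalization.Away

/-- Let `R` be a local ring and `x` a non-zero-divisor of `R`.  Then `x` is
a strong divisor iff the extension `R ⊆ R_x` is Prüfer. -/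
theorem isStrongDivisor_iff_away_prufer {R : Type*} [CommRing R] [IsLocalRing R]
    (x : R) (hx : x ∈ nonZeroDivisors R) :
    IsStrongDivisor x ↔ (algebraMap R (Localization.Away x)).IsPrufer := by
  have hinj : Function.Injective (algebraMap R (Localization.Away x)) :=
    IsLocalization.injective _ (Submonoid.powers_le.mpr hx)
  rw [RingHom.isPrufer_iff_memRangeOrInvMemRange hinj, IsStrongDivisor,
    Ideal.forall_le_span_singleton_or_span_singleton_le_iff, and_iff_right hx]
  exact ⟨IsLocalization.Away.memRangeOrInvMemRange_of_forall_dvd_or_dvd x,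
    IsLocalization.Away.forall_dvd_or_dvd_of_memRangeOrInvMemRange x hinj⟩
end

section
/- Let R be a local commutative ring and s a strong divisor of R that is not a unit. Then P := ⋂_{n ∈ ℕ} R·sⁿ is a prime ideal of R, the localization R_s of R away from s coincides with the localization R_P of R at the prime P (the canonical R-algebra map R_P → R_s is an isomorphism), P·R_s = P, and the quotient R/P is a valuation domain. -/
section

variable {R : Type*} [CommRing R]

def IsSpanComparable (a : R) : Prop :=
  ∀ I : Ideal R, I ≤ Ideal.span {a} ∨ Ideal.span {a} ≤ I

namespace IsSpanComparable

theorem one : IsSpanComparable (1 : R) :=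
  fun _ => Or.inl (by simp)

theorem mul {a b : R} (ha : IsSpanComparable a) (hb : IsSpanComparable b) :
    IsSpanComparable (a * b) := by
  intro I
  rcases ha I with hIa | haI
  -- if `I ≤ (a)` then `I = a • (I : a)`, so compare `I : a` with `(b)`
  · rcases hb (I.colon (Ideal.span {a})) with hJb | hbJ
    · left
      intro x hx
      obtain ⟨y, rfl⟩ := Ideal.mem_span_singleton.mp (hIa hx)
      have hy : y ∈ I.colon (Ideal.span {a}) :=
        Ideal.mem_colon_span_singleton.mpr (by rwa [mul_comm])
      obtain ⟨z, rfl⟩ := Ideal.mem_span_singleton.mp (hJb hy)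
      exact Ideal.mem_span_singleton.mpr ⟨z, by ring⟩
    · right
      rw [Ideal.span_singleton_le_iff_mem, mul_comm]
      exact Ideal.mem_colon_span_singleton.mp (hbJ (Ideal.mem_span_singleton_self b))
  · exact Or.inr ((Ideal.span_singleton_le_span_singleton.mpr (dvd_mul_right a b)).trans haI)

theorem pow {a : R} (ha : IsSpanComparable a) (n : ℕ) : IsSpanComparable (a ^ n) := by
  induction n with
  | zero => simpa using one
  | succ n ih => simpa [pow_succ] using ih.mul ha

theorem dvd_or_dvd {a : R} (ha : IsSpanComparable a) (x : R) : a ∣ x ∨ x ∣ a := by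
  simpa [Ideal.mem_span_singleton] using ha (Ideal.span {x})

theorem dvd_or_dvd_of_isLeftRegular_mul {b d : R} (hbd : IsSpanComparable (b * d))
    (hd : IsLeftRegular d) (a : R) : a ∣ b ∨ b ∣ a := by
  rw [mul_comm] at hbd
  rcases hbd.dvd_or_dvd (d * a) with h | h
  · exact Or.inr (hd.dvd_cancel_left.mp h)
  · exact Or.inl (hd.dvd_cancel_left.mp h)

end IsSpanComparable

theorem IsLocalization.coe_map_algebraMap_eq_image {A : Type*} [CommSemiring A] (M : Submonoid A)
    (S : Type*) [CommSemiring S] [Algebra A S] [IsLocalization M S] {I : Ideal A}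
    (hI : ∀ m ∈ M, ∀ x ∈ I, ∃ y ∈ I, x = m * y) :
    (I.map (algebraMap A S) : Set S) = algebraMap A S '' I := by
  refine Set.Subset.antisymm (fun z hz => ?_)
    (Set.image_subset_iff.mpr fun x hx => Ideal.mem_map_of_mem _ hx)
  obtain ⟨⟨⟨x, hx⟩, ⟨m, hm⟩⟩, e⟩ := (IsLocalization.mem_map_algebraMap_iff M S).mp hz
  obtain ⟨y, hy, rfl⟩ := hI m hm x hx
  refine ⟨y, hy, (IsLocalization.map_units S ⟨m, hm⟩).mul_right_cancel ?_⟩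
  calc algebraMap A S y * algebraMap A S m = algebraMap A S (m * y) := by
        rw [map_mul, mul_comm]
    _ = z * algebraMap A S m := e.symm

section Powers

variable {s : R}

theorem mem_iInf_span_pow_iff {x : R} :
    x ∈ ⨅ n : ℕ, Ideal.span {s ^ n} ↔ ∀ n : ℕ, s ^ n ∣ x := by
  simp [Ideal.mem_span_singleton]

theorem not_pow_succ_dvd_pow (hreg : IsLeftRegular s) (hsu : ¬IsUnit s) (n : ℕ) :
    ¬s ^ (n + 1) ∣ s ^ n := fun h =>
  hsu (isUnit_of_dvd_one ((hreg.pow n).dvd_cancel_left.mp (by rwa [mul_one, ← pow_succ])))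

theorem exists_mem_iInf_span_pow_eq_pow_mul (hreg : IsLeftRegular s) {x : R}
    (hx : x ∈ ⨅ n : ℕ, Ideal.span {s ^ n}) (n : ℕ) :
    ∃ y ∈ ⨅ n : ℕ, Ideal.span {s ^ n}, x = s ^ n * y := by
  rw [mem_iInf_span_pow_iff] at hx
  obtain ⟨y, rfl⟩ := hx n
  refine ⟨y, mem_iInf_span_pow_iff.mpr fun m => (hreg.pow n).dvd_cancel_left.mp ?_, rfl⟩
  rw [← pow_add]
  exact hx (n + m)

theorem exists_dvd_pow_of_notMem_iInf_span_pow (hs : IsSpanComparable s) {x : R}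
    (hx : x ∉ ⨅ n : ℕ, Ideal.span {s ^ n}) : ∃ n : ℕ, x ∣ s ^ n := by
  obtain ⟨n, hn⟩ := not_forall.mp (mt mem_iInf_span_pow_iff.mpr hx)
  exact ⟨n, ((hs.pow n).dvd_or_dvd x).resolve_left hn⟩

theorem notMem_iInf_span_pow_of_dvd_pow (hreg : IsLeftRegular s) (hsu : ¬IsUnit s) {x : R}
    {n : ℕ} (hx : x ∣ s ^ n) : x ∉ ⨅ n : ℕ, Ideal.span {s ^ n} := fun h =>
  not_pow_succ_dvd_pow hreg hsu n ((mem_iInf_span_pow_iff.mp h (n + 1)).trans hx)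

theorem isPrime_iInf_span_pow (hreg : IsLeftRegular s) (hsu : ¬IsUnit s)
    (hs : IsSpanComparable s) : (⨅ n : ℕ, Ideal.span {s ^ n}).IsPrime := by
  refine Ideal.isPrime_iff.mpr ⟨(Ideal.ne_top_iff_one _).mpr
    (notMem_iInf_span_pow_of_dvd_pow hreg hsu (pow_zero s).symm.dvd), fun {a b} hab => ?_⟩
  by_contra! h
  obtain ⟨m, hm⟩ := exists_dvd_pow_of_notMem_iInf_span_pow hs h.1
  obtain ⟨k, hk⟩ := exists_dvd_pow_of_notMem_iInf_span_pow hs h.2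
  exact notMem_iInf_span_pow_of_dvd_pow hreg hsu (pow_add s m k ▸ mul_dvd_mul hm hk) hab

theorem isLocalization_away_atPrime_iInf_span_pow (hreg : IsLeftRegular s) (hsu : ¬IsUnit s)
    (hs : IsSpanComparable s) :
    letI := isPrime_iInf_span_pow hreg hsu hs
    IsLocalization.AtPrime (Localization.Away s) (⨅ n : ℕ, Ideal.span {s ^ n}) := by
  let := isPrime_iInf_span_pow hreg hsu hs
  refine IsLocalization.isLocalization_of_is_exists_mul_mem _ (Submonoid.powers s) _ ?_ ?_
  · rintro _ ⟨n, rfl⟩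
    exact notMem_iInf_span_pow_of_dvd_pow hreg hsu dvd_rfl
  · rintro ⟨x, hx⟩
    obtain ⟨n, c, hc⟩ := exists_dvd_pow_of_notMem_iInf_span_pow hs hx
    exact ⟨c, n, hc.trans (mul_comm _ _)⟩

theorem dvd_or_dvd_of_notMem_iInf_span_pow (hreg : IsLeftRegular s) (hs : IsSpanComparable s)
    {b : R} (hb : b ∉ ⨅ n : ℕ, Ideal.span {s ^ n}) (a : R) : a ∣ b ∨ b ∣ a := by
  obtain ⟨k, d, hd⟩ := exists_dvd_pow_of_notMem_iInf_span_pow hs hb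
  have hd' : IsLeftRegular d := (hd ▸ hreg.pow k).of_mul
  exact (hd ▸ hs.pow k).dvd_or_dvd_of_isLeftRegular_mul hd' a

theorem dvd_or_dvd_quotient_iInf_span_pow (hreg : IsLeftRegular s) (hs : IsSpanComparable s)
    (a b : R ⧸ ⨅ n : ℕ, Ideal.span {s ^ n}) : a ∣ b ∨ b ∣ a := by
  obtain ⟨a, rfl⟩ := Ideal.Quotient.mk_surjective a
  obtain ⟨b, rfl⟩ := Ideal.Quotient.mk_surjective b
  by_cases hb : b ∈ ⨅ n : ℕ, Ideal.span {s ^ n}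
  · exact Or.inl (by rw [Ideal.Quotient.eq_zero_iff_mem.mpr hb]; exact dvd_zero _)
  · exact (dvd_or_dvd_of_notMem_iInf_span_pow hreg hs hb a).imp (map_dvd _) (map_dvd _)

end Powers

end

theorem strong_divisor_divided_prime_general {R : Type*} [CommRing R]
    (s : R) (hs : IsStrongDivisor s) (hsu : ¬ IsUnit s)
    (P : Ideal R) (hPdef : P = ⨅ n : ℕ, Ideal.span {s ^ n}) :
    ∃ hP : P.IsPrime,
      (letI := hP; IsLocalization.AtPrime (Localization.Away s) P) ∧
      (Ideal.map (algebraMap R (Localization.Away s)) P : Set (Localization.Away s)) =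
        (algebraMap R (Localization.Away s)) '' (P : Set R) ∧
      IsDomain (R ⧸ P) ∧ (∀ a b : R ⧸ P, a ∣ b ∨ b ∣ a) := by
  obtain ⟨hs₀, hcomp⟩ := hs
  have hreg : IsLeftRegular s := (isRegular_iff_mem_nonZeroDivisors.mpr hs₀).left
  subst hPdef
  have hP := isPrime_iInf_span_pow hreg hsu hcomp
  refine ⟨hP, isLocalization_away_atPrime_iInf_span_pow hreg hsu hcomp,
    IsLocalization.coe_map_algebraMap_eq_image (Submonoid.powers s) _ ?_,
    Ideal.Quotient.isDomain _, dvd_or_dvd_quotient_iInf_span_pow hreg hcomp⟩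
  rintro _ ⟨n, rfl⟩ x hx
  exact exists_mem_iInf_span_pow_eq_pow_mul hreg hx n

/-- Let `R` be local and `s` a non-unit strong divisor of `R`.  Then
`P := ⋂ₙ R·sⁿ` is a prime ideal, `R_s` coincides with the localization of `R` at `P`
(i.e., `R_s` is the localization of `R` at the complement of `P`), `P·R_s = P` (the extension
of `P` to `R_s` is just the image of `P`), and `R/P` is a valuation domain. -/
theorem strong_divisor_divided_prime {R : Type*} [CommRing R] [IsLocalRing R]
    (s : R) (hs : IsStrongDivisor s) (hsu : ¬ IsUnit s)
    (P : Ideal R) (hPdef : P = ⨅ n : ℕ, Ideal.span {s ^ n}) :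
    ∃ hP : P.IsPrime,
      (letI := hP; IsLocalization.AtPrime (Localization.Away s) P) ∧
      (Ideal.map (algebraMap R (Localization.Away s)) P : Set (Localization.Away s)) =
        (algebraMap R (Localization.Away s)) '' (P : Set R) ∧
      IsDomain (R ⧸ P) ∧ (∀ a b : R ⧸ P, a ∣ b ∨ b ∣ a) :=
  strong_divisor_divided_prime_general s hs hsu P hPdef
end
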